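/- arXiv:1606.01359 — 2 statements merged into one kernel-verified Lean document; each statement's English description precedes it below -/
import Mathlib

section
/- Let X and Y be nontrivial real Banach spaces, let H be a closed linear subspace of L(X,Y) containing all finite rank operators, and let δ > 0. If H (with the induced operator norm) is weakly δ-average rough and the dual space X* is non-rough, then Y is weakly δ-average rough. -/
open scoped BigOperators

/-- A Banach space `Z` is `δ`-average rough. -/
def IsAverageRough (Z : Type*) [NormedAddCommGroup Z] (δ : ℝ) : Prop :=
  ∀ n : ℕ, 0 < n → ∀ x : Fin n → Z, (∀ i, ‖x i‖ = 1) →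
    ∀ ε > (0 : ℝ), ∀ η > (0 : ℝ), ∃ y : Z, 0 < ‖y‖ ∧ ‖y‖ < η ∧
      (δ - ε) * ‖y‖ ≤ (1 / (n : ℝ)) * ∑ i, (‖x i + y‖ + ‖x i - y‖) - 2

/-- A Banach space `Z` is `δ`-rough. -/
def IsRough (Z : Type*) [NormedAddCommGroup Z] (δ : ℝ) : Prop :=
  ∀ x : Z, ‖x‖ = 1 →
    ∀ ε > (0 : ℝ), ∀ η > (0 : ℝ), ∃ y : Z, 0 < ‖y‖ ∧ ‖y‖ < η ∧
      (δ - ε) * ‖y‖ ≤ ‖x + y‖ + ‖x - y‖ - 2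

/-- A Banach space `Z` is non-rough if it is `ε`-rough for no `ε > 0`. -/
def NonRough (Z : Type*) [NormedAddCommGroup Z] : Prop :=
  ¬ ∃ ε > (0 : ℝ), IsRough Z ε

/-- A Banach space `Z` is octahedral. -/
def Octahedral (Z : Type*) [NormedAddCommGroup Z] : Prop :=
  ∀ (n : ℕ) (x : Fin n → Z), (∀ i, ‖x i‖ = 1) →
    ∀ ε > (0 : ℝ), ∃ y : Z, ‖y‖ = 1 ∧ ∀ i, 2 - ε ≤ ‖x i + y‖

/-- A Banach space `Z` is alternatively octahedral. -/
def AlternativelyOctahedral (Z : Type*) [NormedAddCommGroup Z] : Prop :=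
  ∀ (n : ℕ) (x : Fin n → Z), (∀ i, ‖x i‖ = 1) →
    ∀ ε > (0 : ℝ), ∃ y : Z, ‖y‖ = 1 ∧ ∀ i, 2 - ε ≤ max ‖x i + y‖ ‖x i - y‖

/-- A Banach space `X` is weakly `δ`-average rough: every non-empty relatively weak*
open subset of the closed unit ball of the dual has diameter at least `δ`. -/
def WeaklyAverageRough (X : Type*) [NormedAddCommGroup X] [NormedSpace ℝ X] (δ : ℝ) : Prop :=
  ∀ V : Set (WeakDual ℝ X), IsOpen V →
    ∀ U : Set (StrongDual ℝ X),
      U = {f : StrongDual ℝ X | ‖f‖ ≤ 1} ∩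
            {f : StrongDual ℝ X | StrongDual.toWeakDual f ∈ V} →
      U.Nonempty → δ ≤ Metric.diam U

/-- The dual of a normed space, with the norm topology on the space. -/
abbrev DualH (Z : Type*) [NormedAddCommGroup Z] [NormedSpace ℝ Z] : Type _ := StrongDual ℝ Z

noncomputable def instNormedAddCommGroupDualH (Z : Type*) [NormedAddCommGroup Z] [NormedSpace ℝ Z] :
    NormedAddCommGroup (DualH Z) :=
  ContinuousLinearMap.toNormedAddCommGroup

noncomputable def instNormedSpaceDualH (Z : Type*) [NormedAddCommGroup Z] [NormedSpace ℝ Z] :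
    NormedSpace ℝ (DualH Z) :=
  ContinuousLinearMap.toNormedSpace

attribute [instance 10] instNormedAddCommGroupDualH

attribute [instance 10] instNormedSpaceDualH

section HelpersStmt17

open NormedSpace Metric Set

set_option synthInstance.maxHeartbeats 1000000
set_option maxHeartbeats 1000000

lemma exists_pos_bound' {α : Type*} (I : Finset α) (β : α → ℝ) (h : ∀ z ∈ I, 0 < β z) :
    ∃ c : ℝ, 0 < c ∧ ∀ z ∈ I, c ≤ β z := by
  classical
  induction I using Finset.induction with
  | empty => exact ⟨1, zero_lt_one, by simp⟩
  | @insert a s hni ih =>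
    obtain ⟨c, hc, hcle⟩ := ih (fun z hz => h z (Finset.mem_insert_of_mem hz))
    refine ⟨min c (β a), lt_min hc (h a (Finset.mem_insert_self a s)), ?_⟩
    intro z hz
    rcases Finset.mem_insert.mp hz with rfl | hz
    · exact min_le_right _ _
    · exact le_trans (min_le_left _ _) (hcle z hz)

lemma exists_unit_vector_big' {Z : Type*} [NormedAddCommGroup Z] [NormedSpace ℝ Z]
    (f : StrongDual ℝ Z) (c : ℝ) (hc : 0 ≤ c) (hf : c < ‖f‖) :
    ∃ S : Z, ‖S‖ ≤ 1 ∧ c < f S := by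
  by_contra hcon
  push_neg at hcon
  have : ‖f‖ ≤ c := by
    apply ContinuousLinearMap.opNorm_le_bound _ hc
    intro x
    rcases eq_or_ne x 0 with rfl | hx
    · simp
    · have hxn : (0:ℝ) < ‖x‖ := norm_pos_iff.mpr hx
      have h1 : f (‖x‖⁻¹ • x) ≤ c := hcon _ (by
        rw [norm_smul, Real.norm_eq_abs, abs_of_pos (inv_pos.mpr hxn),
          inv_mul_cancel₀ (ne_of_gt hxn)])
      have h2 : f (-(‖x‖⁻¹ • x)) ≤ c := hcon _ (by
        rw [norm_neg, norm_smul, Real.norm_eq_abs, abs_of_pos (inv_pos.mpr hxn),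
          inv_mul_cancel₀ (ne_of_gt hxn)])
      rw [map_neg] at h2
      have h3 : |f (‖x‖⁻¹ • x)| ≤ c := abs_le.mpr ⟨by linarith, h1⟩
      have h4 : f (‖x‖⁻¹ • x) = ‖x‖⁻¹ * f x := by rw [map_smul]; rfl
      rw [h4, abs_mul, abs_of_pos (inv_pos.mpr hxn)] at h3
      calc ‖f x‖ = |f x| := rfl
      _ = ‖x‖ * (‖x‖⁻¹ * |f x|) := by field_simp
      _ ≤ ‖x‖ * c := mul_le_mul_of_nonneg_left h3 (le_of_lt hxn)
      _ = c * ‖x‖ := by ring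
  linarith

lemma exists_ann_functional' {Y : Type*} [NormedAddCommGroup Y] [NormedSpace ℝ Y]
    (I : Finset Y) (hsp : Submodule.span ℝ (I : Set Y) ≠ ⊤) :
    ∃ Λ : StrongDual ℝ Y, ‖Λ‖ = 1 ∧ ∀ z ∈ I, Λ z = 0 := by
  classical
  set E := Submodule.span ℝ (I : Set Y) with hE
  haveI : FiniteDimensional ℝ E := by
    apply FiniteDimensional.span_of_finite
    exact I.finite_toSet
  have hclosed : IsClosed (E : Set Y) := Submodule.closed_of_finiteDimensional E
  obtain ⟨y₁, hy₁⟩ : ∃ y₁ : Y, y₁ ∉ E := by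
    by_contra hcon
    push_neg at hcon
    exact hsp (Submodule.eq_top_iff'.mpr hcon)
  obtain ⟨f, u, hfy, hfb⟩ := geometric_hahn_banach_point_closed (E.convex) hclosed hy₁
  have hu0 : u < 0 := by
    have := hfb 0 (Submodule.zero_mem E)
    simpa using this
  have hfE : ∀ b ∈ E, f b = 0 := by
    intro b hb
    by_contra hfb0
    have hall : ∀ t : ℝ, u < t * f b := by
      intro t
      have := hfb (t • b) (Submodule.smul_mem E t hb)
      simpa [map_smul] using this
    have := hall ((u - 1)/(f b))
    rw [div_mul_cancel₀ _ hfb0] at this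
    linarith
  have hfy1 : f y₁ < 0 := lt_trans hfy hu0
  have hfne : f ≠ 0 := by
    intro h
    rw [h] at hfy1
    simp at hfy1
  have hfn : (0:ℝ) < ‖f‖ := norm_pos_iff.mpr hfne
  refine ⟨‖f‖⁻¹ • f, ?_, ?_⟩
  · rw [norm_smul, Real.norm_eq_abs, abs_of_pos (inv_pos.mpr hfn),
      inv_mul_cancel₀ (ne_of_gt hfn)]
  · intro z hz
    have hzE : z ∈ E := Submodule.subset_span hz
    show ‖f‖⁻¹ • (f z) = 0
    rw [hfE z hzE]
    simp

lemma findim_smooth' {Y : Type*} [NormedAddCommGroup Y] [NormedSpace ℝ Y]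
    [Nontrivial Y] [FiniteDimensional ℝ Y] (ε : ℝ) (hε : 0 < ε) :
    ∃ (y₀ : Y) (ρ : ℝ), ‖y₀‖ = 1 ∧ 0 < ρ ∧
      ∀ v : Y, ‖v‖ ≤ ρ → ‖y₀ + v‖ + ‖y₀ - v‖ ≤ 2 + ε * ‖v‖ := by
  classical
  set L : Y →L[ℝ] EuclideanSpace ℝ (Fin (Module.finrank ℝ Y)) :=
    (toEuclidean : Y ≃L[ℝ] _).toContinuousLinearMap with hL
  obtain ⟨e, he⟩ := exists_norm_eq Y (zero_le_one)
  have hes : e ∈ sphere (0:Y) 1 := by simpa [mem_sphere_zero_iff_norm] using he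
  obtain ⟨y₀, hy₀s, hmin⟩ := (isCompact_sphere (0:Y) 1).exists_isMinOn ⟨e, hes⟩
    ((L.continuous.norm).continuousOn)
  have hy₀ : ‖y₀‖ = 1 := by simpa [mem_sphere_zero_iff_norm] using hy₀s
  set ρ := ‖L y₀‖ with hρ
  have hy₀ne : y₀ ≠ 0 := by
    intro h; rw [h, norm_zero] at hy₀; norm_num at hy₀
  have hρpos : 0 < ρ := by
    rw [hρ, norm_pos_iff]
    intro h
    exact hy₀ne ((toEuclidean (E := Y)).injective (by simpa [hL] using h))
  set K := max ‖L‖ 1 with hK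
  have hKpos : (0:ℝ) < K := lt_of_lt_of_le zero_lt_one (le_max_right _ _)
  have hLbound : ∀ v : Y, ‖L v‖ ≤ K * ‖v‖ := by
    intro v
    calc ‖L v‖ ≤ ‖L‖ * ‖v‖ := L.le_opNorm v
    _ ≤ K * ‖v‖ := mul_le_mul_of_nonneg_right (le_max_left _ _) (norm_nonneg v)
  have hlower : ∀ z : Y, ρ * ‖z‖ ≤ ‖L z‖ := by
    intro z
    rcases eq_or_ne z 0 with rfl | hz
    · simp
    · have hzn : (0:ℝ) < ‖z‖ := norm_pos_iff.mpr hz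
      have hzs : (‖z‖⁻¹ • z) ∈ sphere (0:Y) 1 := by
        rw [mem_sphere_zero_iff_norm, norm_smul, Real.norm_eq_abs,
          abs_of_pos (inv_pos.mpr hzn), inv_mul_cancel₀ (ne_of_gt hzn)]
      have h1 : ρ ≤ ‖L (‖z‖⁻¹ • z)‖ := hmin hzs
      have h2 : ‖L (‖z‖⁻¹ • z)‖ = ‖z‖⁻¹ * ‖L z‖ := by
        rw [map_smul, norm_smul, Real.norm_eq_abs, abs_of_pos (inv_pos.mpr hzn)]
      rw [h2] at h1
      calc ρ * ‖z‖ ≤ (‖z‖⁻¹ * ‖L z‖) * ‖z‖ := mul_le_mul_of_nonneg_right h1 (le_of_lt hzn)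
      _ = ‖L z‖ * (‖z‖⁻¹ * ‖z‖) := by ring
      _ = ‖L z‖ := by rw [inv_mul_cancel₀ (ne_of_gt hzn), mul_one]
  refine ⟨y₀, ε * ρ^2 / K^2, hy₀, by positivity, ?_⟩
  intro v hv
  set a := L y₀ with ha
  set b := L v with hb
  set s := ‖a + b‖ with hs
  set t := ‖a - b‖ with ht
  set q := ‖b‖ with hq
  have hpar : s * s + t * t = 2 * (ρ * ρ + q * q) := by
    rw [hs, ht, hρ, hq]
    have hpl := parallelogram_law_with_norm ℝ a b
    simp only [sq] at hpl
    exact hpl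
  have hst : 0 ≤ s + t := by positivity
  have hsum : s + t ≤ 2 * ρ + q^2 / ρ := by
    have hsq : (s + t)^2 ≤ (2 * ρ + q^2/ρ)^2 := by
      have h1 : (s+t)^2 ≤ 2*(s*s + t*t) := by nlinarith [sq_nonneg (s - t)]
      have h2 : (2*ρ + q^2/ρ)^2 = 4*ρ^2 + 4*q^2 + (q^2/ρ)^2 := by
        field_simp; ring
      nlinarith [sq_nonneg (q^2/ρ)]
    have hb2 : (0:ℝ) < 2*ρ + q^2/ρ := by positivity
    nlinarith
  have hfin1 : ρ * ‖y₀ + v‖ ≤ s := by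
    have := hlower (y₀ + v)
    rwa [map_add] at this
  have hfin2 : ρ * ‖y₀ - v‖ ≤ t := by
    have := hlower (y₀ - v)
    rwa [map_sub] at this
  have hq2 : q^2 ≤ ε * ‖v‖ * ρ^2 := by
    have h1 : q ≤ K * ‖v‖ := hLbound v
    have h2 : q^2 ≤ K^2 * ‖v‖^2 := by nlinarith [norm_nonneg b, norm_nonneg v]
    have h3 : K^2 * ‖v‖ ≤ ε * ρ^2 := by
      have h4 := mul_le_mul_of_nonneg_left hv (le_of_lt (by positivity : (0:ℝ) < K^2))
      calc K^2 * ‖v‖ ≤ K^2 * (ε * ρ^2 / K^2) := h4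
      _ = ε * ρ^2 * (K^2 / K^2) := by ring
      _ = ε * ρ^2 := by rw [div_self (by positivity : (K:ℝ)^2 ≠ 0), mul_one]
    nlinarith [norm_nonneg v]
  have hcomb : ρ * (‖y₀ + v‖ + ‖y₀ - v‖) ≤ 2 * ρ + q^2/ρ := by
    calc ρ * (‖y₀ + v‖ + ‖y₀ - v‖) = ρ * ‖y₀ + v‖ + ρ * ‖y₀ - v‖ := by ring
    _ ≤ s + t := by linarith
    _ ≤ 2 * ρ + q^2/ρ := hsum
  have hq3 : q^2 / ρ ≤ ε * ‖v‖ * ρ := by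
    rw [div_le_iff₀ hρpos]
    calc q^2 ≤ ε * ‖v‖ * ρ^2 := hq2
    _ = ε * ‖v‖ * ρ * ρ := by ring
  have hfinal : ρ * (‖y₀ + v‖ + ‖y₀ - v‖) ≤ ρ * (2 + ε * ‖v‖) := by
    calc ρ * (‖y₀ + v‖ + ‖y₀ - v‖) ≤ 2 * ρ + q^2/ρ := hcomb
    _ ≤ 2 * ρ + ε * ‖v‖ * ρ := by linarith
    _ = ρ * (2 + ε * ‖v‖) := by ring
  exact le_of_mul_le_mul_left hfinal hρpos

variable {X Y : Type*} [NormedAddCommGroup X] [NormedSpace ℝ X]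
  [NormedAddCommGroup Y] [NormedSpace ℝ Y]

lemma key_smooth' (x' : StrongDual ℝ X) (hx' : ‖x'‖ = 1) (r ε γ : ℝ)
    (hr0 : 0 < r) (hr : r ≤ 1/2) (hε : 0 < ε) (hγ : 0 < γ)
    (hsm : ∀ v : StrongDual ℝ X, ‖v‖ ≤ r → ‖x' + v‖ + ‖x' - v‖ ≤ 2 + ε * ‖v‖)
    (x₀ : X) (hx₀ : ‖x₀‖ ≤ 1) (hx₀' : 1 - γ < x' x₀)
    (w : Y) (hw : ‖w‖ = 1) (A : X →L[ℝ] Y) (hA : ‖A‖ ≤ r/4) :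
    ‖x'.smulRight w + A‖ ≤ ‖w + A x₀‖ + ε * ‖A‖ + γ := by
  have hA0 : (0:ℝ) ≤ ‖A‖ := norm_nonneg A
  have hA1 : ‖A‖ ≤ 1/8 := le_trans hA (by linarith)
  have hRHS1 : (3:ℝ)/4 ≤ ‖w + A x₀‖ := by
    have hAx : ‖A x₀‖ ≤ ‖A‖ := by
      calc ‖A x₀‖ ≤ ‖A‖ * ‖x₀‖ := A.le_opNorm x₀
      _ ≤ ‖A‖ * 1 := by nlinarith
      _ = ‖A‖ := mul_one _
    have h2 : ‖w‖ ≤ ‖w + A x₀‖ + ‖A x₀‖ := by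
      calc ‖w‖ = ‖(w + A x₀) - A x₀‖ := by rw [add_sub_cancel_right]
      _ ≤ ‖w + A x₀‖ + ‖A x₀‖ := norm_sub_le _ _
    rw [hw] at h2
    linarith
  have hRHSnn : (0:ℝ) ≤ ‖w + A x₀‖ + ε * ‖A‖ + γ := by positivity
  have aux : ∀ h : StrongDual ℝ Y, ‖h‖ ≤ 1 → 0 < h w → ‖h.comp A‖ ≤ r/2 * h w →
      ‖(h w) • x' + h.comp A‖ ≤ ‖w + A x₀‖ + ε * ‖A‖ + γ := by
    intro h hh hc hu2
    set c := h w with hcdef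
    set u := h.comp A with hudef
    have hu : ‖u‖ ≤ ‖A‖ := by
      calc ‖u‖ ≤ ‖h‖ * ‖A‖ := h.opNorm_comp_le A
      _ ≤ 1 * ‖A‖ := by nlinarith
      _ = ‖A‖ := one_mul _
    have hc1 : c ≤ 1 := by
      calc c ≤ ‖h w‖ := le_abs_self _
      _ ≤ ‖h‖ * ‖w‖ := h.le_opNorm w
      _ ≤ 1 := by rw [hw]; linarith
    set v := c⁻¹ • u with hvdef
    have hvn : ‖v‖ = c⁻¹ * ‖u‖ := by
      rw [hvdef, norm_smul, Real.norm_eq_abs, abs_of_pos (by positivity)]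
    have hvr : ‖v‖ ≤ r/2 := by
      rw [hvn]
      have step : c⁻¹ * ‖u‖ ≤ c⁻¹ * (r/2 * c) :=
        mul_le_mul_of_nonneg_left hu2 (by positivity)
      calc c⁻¹ * ‖u‖ ≤ c⁻¹ * (r/2 * c) := step
      _ = r/2 * (c⁻¹ * c) := by ring
      _ = r/2 := by rw [inv_mul_cancel₀ (ne_of_gt hc), mul_one]
    have h1 : ‖x' + v‖ + ‖x' - v‖ ≤ 2 + ε * ‖v‖ := hsm v (le_trans hvr (by linarith))
    have h2 : 1 - γ - v x₀ < ‖x' - v‖ := by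
      have h3 : (x' - v) x₀ ≤ ‖x' - v‖ := by
        calc (x' - v) x₀ ≤ ‖(x' - v) x₀‖ := le_abs_self _
        _ ≤ ‖x' - v‖ * ‖x₀‖ := (x' - v).le_opNorm x₀
        _ ≤ ‖x' - v‖ * 1 := by nlinarith [norm_nonneg (x' - v)]
        _ = _ := mul_one _
      have h4 : (x' - v) x₀ = x' x₀ - v x₀ := rfl
      linarith
    have h5 : ‖x' + v‖ ≤ 1 + γ + ε * ‖v‖ + v x₀ := by linarith
    have hkey : c • (x' + v) = c • x' + u := by
      rw [smul_add, hvdef, smul_smul, mul_inv_cancel₀ (ne_of_gt hc), one_smul]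
    have hLHS : ‖c • x' + u‖ = c * ‖x' + v‖ := by
      rw [← hkey, norm_smul, Real.norm_eq_abs, abs_of_pos hc]
    rw [hLHS]
    have hcu : c * ‖v‖ = ‖u‖ := by
      rw [hvn]; field_simp
    have hcv : c * (v x₀) = u x₀ := by
      rw [hvdef]
      show c * (c⁻¹ * u x₀) = u x₀
      field_simp
    have hfin : c + u x₀ ≤ ‖w + A x₀‖ := by
      have he : c + u x₀ = h (w + A x₀) := by
        rw [hcdef, hudef]
        simp
      rw [he]
      calc h (w + A x₀) ≤ ‖h (w + A x₀)‖ := le_abs_self _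
      _ ≤ ‖h‖ * ‖w + A x₀‖ := h.le_opNorm _
      _ ≤ 1 * ‖w + A x₀‖ := by nlinarith [norm_nonneg (w + A x₀)]
      _ = _ := one_mul _
    have expand : c * (1 + γ + ε * ‖v‖ + v x₀) = c + c * γ + ε * (c * ‖v‖) + c * v x₀ := by ring
    calc c * ‖x' + v‖ ≤ c * (1 + γ + ε * ‖v‖ + v x₀) :=
          mul_le_mul_of_nonneg_left h5 (le_of_lt hc)
    _ = c + c * γ + ε * ‖u‖ + u x₀ := by rw [expand, hcu, hcv]
    _ ≤ (c + u x₀) + ε * ‖A‖ + γ := by nlinarith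
    _ ≤ ‖w + A x₀‖ + ε * ‖A‖ + γ := by linarith
  apply ContinuousLinearMap.opNorm_le_bound _ hRHSnn
  intro x
  rcases eq_or_ne ((x'.smulRight w + A) x) 0 with hz | hz
  · rw [hz, norm_zero]; positivity
  obtain ⟨h, hh1, hh2⟩ := exists_dual_vector ℝ _ (norm_ne_zero_iff.mpr hz)
  have hstep : ‖(x'.smulRight w + A) x‖ ≤ ‖(h w) • x' + h.comp A‖ * ‖x‖ := by
    have hh2' : h ((x'.smulRight w + A) x) = ‖(x'.smulRight w + A) x‖ := by
      exact_mod_cast hh2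
    have heval : ((h w) • x' + h.comp A) x = ‖(x'.smulRight w + A) x‖ := by
      rw [← hh2']
      show h w * x' x + h (A x) = h (x' x • w + A x)
      rw [map_add]
      have : h (x' x • w) = x' x * h w := by rw [map_smul]; rfl
      rw [this]; ring
    calc ‖(x'.smulRight w + A) x‖ = ((h w) • x' + h.comp A) x := heval.symm
    _ ≤ ‖((h w) • x' + h.comp A) x‖ := le_abs_self _
    _ ≤ ‖(h w) • x' + h.comp A‖ * ‖x‖ := ContinuousLinearMap.le_opNorm _ x
  refine le_trans hstep (mul_le_mul_of_nonneg_right ?_ (norm_nonneg x))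
  have hh1' : ‖h‖ ≤ 1 := le_of_eq hh1
  set c := h w with hcdef
  have hu : ‖h.comp A‖ ≤ ‖A‖ := by
    calc ‖h.comp A‖ ≤ ‖h‖ * ‖A‖ := h.opNorm_comp_le A
    _ ≤ 1 * ‖A‖ := by nlinarith
    _ = ‖A‖ := one_mul _
  rcases le_or_gt ‖h.comp A‖ (r/2 * |c|) with hcase | hcase
  · rcases lt_trichotomy c 0 with hc | hc | hc
    · have e1 : ‖c • x' + h.comp A‖ = ‖((-h) w) • x' + (-h).comp A‖ := by
        have he : ((-h) w) • x' + (-h).comp A = -(c • x' + h.comp A) := by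
          ext z
          show (-h) w * x' z + (-h) (A z) = -(c * x' z + h (A z))
          show (-(h w)) * x' z + (-(h (A z))) = -(c * x' z + h (A z))
          rw [hcdef]; ring
        rw [he, norm_neg]
      rw [e1]
      apply aux (-h)
      · rw [norm_neg]; exact hh1'
      · show 0 < -(h w); rw [← hcdef]; linarith
      · have e2 : ‖(-h).comp A‖ = ‖h.comp A‖ := by
          have : (-h).comp A = -(h.comp A) := by ext z; rfl
          rw [this, norm_neg]
        rw [e2]
        have e3 : (-h) w = -c := by show -(h w) = -c; rw [hcdef]
        rw [e3]
        rwa [abs_of_neg hc] at hcase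
    · have hle0 : ‖h.comp A‖ ≤ 0 := by rw [hc] at hcase; simpa using hcase
      have hu0 : h.comp A = 0 := by
        have h0 := norm_nonneg (h.comp A)
        have : ‖h.comp A‖ = 0 := le_antisymm hle0 h0
        exact norm_eq_zero.mp this
      rw [hc, hu0, zero_smul, zero_add, norm_zero]
      positivity
    · exact aux h hh1' (by rw [← hcdef]; exact hc) (by rwa [abs_of_pos hc] at hcase)
  · have hcb : |c| < 2 * ‖A‖ / r := by
      rw [lt_div_iff₀ hr0]
      nlinarith
    calc ‖c • x' + h.comp A‖ ≤ ‖c • x'‖ + ‖h.comp A‖ := norm_add_le _ _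
    _ = |c| * 1 + ‖h.comp A‖ := by rw [norm_smul, Real.norm_eq_abs, hx']
    _ ≤ 2 * ‖A‖ / r + ‖A‖ := by nlinarith
    _ ≤ 3/4 := by
        have h1 : 2 * ‖A‖ / r ≤ 1/2 := by
          rw [div_le_iff₀ hr0]
          nlinarith
        linarith
    _ ≤ ‖w + A x₀‖ + ε * ‖A‖ + γ := by
        have : 0 ≤ ε * ‖A‖ := by positivity
        linarith

lemma rank_one_fin' (x' : StrongDual ℝ X) (y : Y) :
    FiniteDimensional ℝ (LinearMap.range ((x'.smulRight y : X →L[ℝ] Y) : X →ₗ[ℝ] Y)) := by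
  have h : LinearMap.range ((x'.smulRight y : X →L[ℝ] Y) : X →ₗ[ℝ] Y) ≤
      Submodule.span ℝ {y} := by
    rintro z ⟨x, rfl⟩
    simp only [ContinuousLinearMap.coe_coe, ContinuousLinearMap.smulRight_apply]
    exact Submodule.smul_mem _ _ (Submodule.mem_span_singleton_self y)
  haveI : FiniteDimensional ℝ (Submodule.span ℝ ({y} : Set Y)) := by infer_instance
  exact Submodule.finiteDimensional_of_le h

lemma dual_transfer' (H : Submodule ℝ (X →L[ℝ] Y)) (x' : StrongDual ℝ X)
    (hx' : ‖x'‖ = 1) (hmem : ∀ y : Y, x'.smulRight y ∈ H)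
    (φ : DualH H) (hφ : ‖φ‖ ≤ 1) :
    ∃ f : StrongDual ℝ Y, ‖f‖ ≤ 1 ∧ ∀ y, f y = φ ⟨x'.smulRight y, hmem y⟩ := by
  let ℓ : Y →ₗ[ℝ] ℝ :=
    { toFun := fun y => φ ⟨x'.smulRight y, hmem y⟩
      map_add' := by
        intro a b
        have h : (⟨x'.smulRight (a+b), hmem _⟩ : H) =
            ⟨x'.smulRight a, hmem a⟩ + ⟨x'.smulRight b, hmem b⟩ := by
          apply Subtype.ext
          ext x
          show x' x • (a + b) = x' x • a + x' x • b
          rw [smul_add]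
        show φ _ = φ _ + φ _
        rw [h, map_add]
      map_smul' := by
        intro c a
        have h : (⟨x'.smulRight (c • a), hmem _⟩ : H) = c • (⟨x'.smulRight a, hmem a⟩ : H) := by
          apply Subtype.ext
          ext x
          show x' x • (c • a) = c • x' x • a
          rw [smul_comm]
        show φ _ = c • φ _
        rw [h, map_smul] }
  refine ⟨ℓ.mkContinuous 1 ?_, ℓ.mkContinuous_norm_le zero_le_one _, fun y => rfl⟩
  intro y
  calc ‖φ ⟨x'.smulRight y, hmem y⟩‖ ≤ ‖φ‖ * ‖(⟨x'.smulRight y, hmem y⟩ : H)‖ := φ.le_opNorm _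
  _ ≤ 1 * (‖x'‖ * ‖y‖) :=
      mul_le_mul hφ (le_of_eq (ContinuousLinearMap.norm_smulRight_apply x' y))
        (norm_nonneg _) zero_le_one
  _ = 1 * ‖y‖ := by rw [hx', one_mul]

lemma pair_of_diam' {Z : Type*} [NormedAddCommGroup Z] [NormedSpace ℝ Z]
    (s : Set (DualH Z)) (c : ℝ) (hc : 0 ≤ c) (hlt : c < Metric.diam s) :
    ∃ φ₁ ∈ s, ∃ φ₂ ∈ s, ∃ S : Z, ‖S‖ ≤ 1 ∧ c < (φ₁ - φ₂) S := by
  have hpair : ¬ ∀ φ₁ ∈ s, ∀ φ₂ ∈ s, dist φ₁ φ₂ ≤ c := by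
    intro hall
    exact absurd (Metric.diam_le_of_forall_dist_le hc hall) (not_le.mpr hlt)
  push_neg at hpair
  obtain ⟨φ₁, h1, φ₂, h2, hd⟩ := hpair
  rw [dist_eq_norm] at hd
  obtain ⟨S, hS1, hS2⟩ := exists_unit_vector_big' (φ₁ - φ₂) c hc hd
  exact ⟨φ₁, h1, φ₂, h2, S, hS1, hS2⟩

end HelpersStmt17

set_option synthInstance.maxHeartbeats 1000000 in
set_option maxHeartbeats 2000000 in
theorem stmt17
    (X Y : Type*) [NormedAddCommGroup X] [NormedSpace ℝ X] [CompleteSpace X] [Nontrivial X]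
    [NormedAddCommGroup Y] [NormedSpace ℝ Y] [CompleteSpace Y] [Nontrivial Y]
    (H : Submodule ℝ (X →L[ℝ] Y)) (hHclosed : IsClosed (H : Set (X →L[ℝ] Y)))
    (hHfin : ∀ T : X →L[ℝ] Y, FiniteDimensional ℝ (LinearMap.range (T : X →ₗ[ℝ] Y)) → T ∈ H)
    (δ : ℝ) (hδ : 0 < δ)
    (hH : WeaklyAverageRough H δ) (hX : NonRough (StrongDual ℝ X)) :
    WeaklyAverageRough Y δ := by
  classical
  open NormedSpace Metric Set in
  -- δ ≤ 2
  have hδ2 : δ ≤ 2 := by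
    have hne : ({f : DualH H | ‖f‖ ≤ 1} ∩
        {f : DualH H | StrongDual.toWeakDual f ∈
          (Set.univ : Set (WeakDual ℝ H))}).Nonempty := by
      exact ⟨0, (le_of_eq (norm_zero : ‖(0 : DualH H)‖ = 0)).trans zero_le_one, by simp⟩
    have h1 := hH Set.univ isOpen_univ _ rfl hne
    have h2 : Metric.diam ({f : DualH H | ‖f‖ ≤ 1} ∩
        {f : DualH H | StrongDual.toWeakDual f ∈
          (Set.univ : Set (WeakDual ℝ H))}) ≤ 2 := by
      apply Metric.diam_le_of_forall_dist_le (by norm_num)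
      intro f hf g hg
      calc dist f g ≤ ‖f‖ + ‖g‖ := dist_le_norm_add_norm f g
      _ ≤ 1 + 1 := add_le_add hf.1 hg.1
      _ = 2 := by norm_num
    exact h1.trans h2
  -- non-roughness data
  have hXdata : ∀ ε' : ℝ, 0 < ε' → ∃ (x' : StrongDual ℝ X) (r : ℝ), ‖x'‖ = 1 ∧
      0 < r ∧ r ≤ 1/2 ∧
      ∀ v : StrongDual ℝ X, ‖v‖ ≤ r → ‖x' + v‖ + ‖x' - v‖ ≤ 2 + ε' * ‖v‖ := by
    intro ε' hε'
    have hnot : ¬ IsRough (StrongDual ℝ X) ε' := fun hr => hX ⟨ε', hε', hr⟩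
    rw [IsRough] at hnot
    push_neg at hnot
    obtain ⟨x', hx'1, ε₀, hε₀, η, hη, hno⟩ := hnot
    refine ⟨x', min (η/2) (1/2), hx'1, by positivity, min_le_right _ _, ?_⟩
    intro v hv
    rcases eq_or_ne v 0 with rfl | hvne
    · simp only [add_zero, sub_zero, norm_zero, mul_zero]
      rw [hx'1]; norm_num
    · have h0 : 0 < ‖v‖ := norm_pos_iff.mpr hvne
      have hvη : ‖v‖ < η := by
        have := le_trans hv (min_le_left (η/2) (1/2))
        linarith
      have hlt := hno v h0 hvη
      have hb : (ε' - ε₀) * ‖v‖ ≤ ε' * ‖v‖ := by nlinarith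
      linarith
  have hrk : ∀ (x' : StrongDual ℝ X) (yy : Y), x'.smulRight yy ∈ H :=
    fun x' yy => hHfin _ (rank_one_fin' x' yy)
  have hφbound : ∀ (ψ : DualH H), ‖ψ‖ ≤ 1 → ∀ T : H,
      ψ T ≤ ‖(T : X →L[ℝ] Y)‖ := by
    intro ψ hψ T
    calc ψ T ≤ |ψ T| := le_abs_self _
    _ ≤ ‖ψ‖ * ‖T‖ := ψ.le_opNorm T
    _ ≤ 1 * ‖T‖ := mul_le_mul_of_nonneg_right hψ (norm_nonneg _)
    _ = ‖(T : X →L[ℝ] Y)‖ := one_mul _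
  -- main goal
  intro V hV U hU hUne
  obtain ⟨W, hW, rfl⟩ := isOpen_induced_iff.mp hV
  refine le_of_forall_pos_le_add ?_
  intro ε hε
  rcases le_or_gt δ ε with hcase0 | hδε
  · have h0 : 0 ≤ Metric.diam U := Metric.diam_nonneg
    linarith
  obtain ⟨f₀, hf₀⟩ := hUne
  rw [hU] at hf₀
  obtain ⟨hf₀b, hf₀V⟩ := hf₀
  have hf₀b' : ‖f₀‖ ≤ 1 := hf₀b
  obtain ⟨I, u, h1, h2⟩ := isOpen_pi_iff.mp hW _ hf₀V
  have hball : ∀ z ∈ I, ∃ a : ℝ, 0 < a ∧ ∀ q : ℝ, |q - f₀ z| < a → q ∈ u z := by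
    intro z hz
    obtain ⟨hop, hmem⟩ := h1 z hz
    obtain ⟨a, ha, hsub⟩ := Metric.isOpen_iff.mp hop _ hmem
    exact ⟨a, ha, fun q hq => hsub (by rwa [Metric.mem_ball, Real.dist_eq])⟩
  choose! αf hα1 hα2 using hball
  obtain ⟨c₀, hc₀, hc₀le⟩ := exists_pos_bound' I (fun z => αf z / (1 + ‖z‖))
    (fun z hz => div_pos (hα1 z hz) (by positivity))
  have hc₀z : ∀ z ∈ I, c₀ * ‖z‖ < αf z := by
    intro z hz
    have h3 := hc₀le z hz
    have h4 : c₀ * (1 + ‖z‖) ≤ αf z := by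
      rw [le_div_iff₀ (by positivity : (0:ℝ) < 1 + ‖z‖)] at h3
      linarith [h3]
    nlinarith [norm_nonneg z]
  have memU : ∀ f : StrongDual ℝ Y, ‖f‖ ≤ 1 →
      (∀ z ∈ I, |f z - f₀ z| < αf z) → f ∈ U := by
    intro f hb hcl
    rw [hU]
    refine ⟨hb, ?_⟩
    show (fun y => f y) ∈ W
    apply h2
    intro z hz
    exact hα2 z (Finset.mem_coe.mp hz) _ (hcl z (Finset.mem_coe.mp hz))
  have hUsub : U ⊆ Metric.closedBall (0 : StrongDual ℝ Y) 1 := by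
    intro f hf
    rw [hU] at hf
    rw [Metric.mem_closedBall, dist_zero_right]
    exact hf.1
  have hUbdd : Bornology.IsBounded U :=
    (Metric.isBounded_closedBall (x := (0 : StrongDual ℝ Y)) (r := 1)).subset hUsub
  by_cases hsp : Submodule.span ℝ (I : Set Y) = ⊤
  · -- Y is finite dimensional: derive a contradiction with hH
    exfalso
    haveI : FiniteDimensional ℝ Y := ⟨⟨I, hsp⟩⟩
    obtain ⟨y₀, ρ, hy₀, hρ, hsmY⟩ := findim_smooth' (Y := Y) (δ/8) (by positivity)
    obtain ⟨x', r, hx'1, hr0, hr12, hsm⟩ := hXdata (δ/8) (by positivity)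
    set t := min (r/8) ρ with htdef
    have ht0 : 0 < t := lt_min (by positivity) hρ
    have ht1 : t ≤ r/8 := min_le_left _ _
    have htρ : t ≤ ρ := min_le_right _ _
    have ht16 : t ≤ 1/16 := by
      calc t ≤ r/8 := ht1
      _ ≤ (1/2)/8 := by linarith
      _ = 1/16 := by norm_num
    set γ := (δ/16) * t with hγdef
    have hγ0 : 0 < γ := by positivity
    have hγ1 : γ < 1/2 := by
      rw [hγdef]
      calc (δ/16) * t ≤ (δ/16) * (1/16) := by
            apply mul_le_mul_of_nonneg_left ht16 (by positivity)
      _ ≤ (2/16) * (1/16) := by nlinarith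
      _ < 1/2 := by norm_num
    obtain ⟨x₀, hx₀1, hx₀2⟩ := exists_unit_vector_big' x' (1 - γ) (by linarith)
      (by rw [hx'1]; linarith)
    set T₀ : X →L[ℝ] Y := x'.smulRight y₀ with hT₀def
    set T₀h : H := ⟨T₀, hrk x' y₀⟩ with hT₀hdef
    have hT₀n : ‖T₀h‖ = 1 := by
      show ‖T₀‖ = 1
      rw [hT₀def, ContinuousLinearMap.norm_smulRight_apply, hx'1, hy₀, one_mul]
    have hT₀ne : T₀h ≠ 0 := by
      intro h
      have h0 : T₀ = 0 := congrArg Subtype.val h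
      have h1 : ‖T₀‖ = 1 := hT₀n
      rw [h0, norm_zero] at h1
      norm_num at h1
    obtain ⟨ψ, hψ1, hψ2⟩ := exists_dual_vector ℝ T₀h (norm_ne_zero_iff.mpr hT₀ne)
    have hψ2' : ψ T₀h = 1 := by
      have : ψ T₀h = ‖T₀h‖ := by exact_mod_cast hψ2
      rw [this, hT₀n]
    set VB : Set (WeakDual ℝ H) := (fun χ : WeakDual ℝ H => χ T₀h) ⁻¹' (Set.Ioi (1 - γ))
      with hVBdef
    have hVBopen : IsOpen VB := (isOpen_Ioi).preimage (WeakDual.eval_continuous _)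
    set UB := {f : DualH H | ‖f‖ ≤ 1} ∩
      {f : DualH H | StrongDual.toWeakDual f ∈ VB} with hUBdef
    have hUBne : UB.Nonempty := by
      refine ⟨ψ, le_of_eq hψ1, ?_⟩
      show ψ T₀h ∈ Set.Ioi (1 - γ)
      rw [hψ2']
      exact Set.mem_Ioi.mpr (by linarith)
    have hdiam := hH VB hVBopen UB rfl hUBne
    obtain ⟨φ₁, hφ₁, φ₂, hφ₂, A, hA1, hA2⟩ := pair_of_diam' UB (δ - δ/8)
      (by linarith) (lt_of_lt_of_le (by linarith) hdiam)
    have hφ₁b : ‖(φ₁ : DualH H)‖ ≤ 1 := hφ₁.1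
    have hφ₂b : ‖(φ₂ : DualH H)‖ ≤ 1 := hφ₂.1
    have hφ₁a : 1 - γ < φ₁ T₀h := hφ₁.2
    have hφ₂a : 1 - γ < φ₂ T₀h := hφ₂.2
    set Ac : X →L[ℝ] Y := (A : X →L[ℝ] Y) with hAcdef
    have hAcn : ‖Ac‖ ≤ 1 := hA1
    -- smoothness bounds
    have hbound : ∀ σ : ℝ, σ = 1 ∨ σ = -1 →
        ‖T₀ + (σ * t) • Ac‖ ≤ ‖y₀ + (σ * t) • (Ac x₀)‖ + (δ/8) * t + γ := by
      intro σ hσ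
      have hσ1 : |σ| = 1 := by rcases hσ with rfl | rfl <;> simp
      have hnA : ‖(σ * t) • Ac‖ ≤ t := by
        rw [norm_smul (σ * t) Ac, Real.norm_eq_abs, abs_mul, hσ1, one_mul, abs_of_pos ht0]
        calc t * ‖Ac‖ ≤ t * 1 := mul_le_mul_of_nonneg_left hAcn (le_of_lt ht0)
        _ = t := mul_one t
      have hnA4 : ‖(σ * t) • Ac‖ ≤ r/4 := le_trans hnA (by linarith)
      have h5 := key_smooth' x' hx'1 r (δ/8) γ hr0 hr12 (by positivity) hγ0 hsm
        x₀ hx₀1 hx₀2 y₀ hy₀ ((σ * t) • Ac) hnA4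
      have happ : ((σ * t) • Ac) x₀ = (σ * t) • (Ac x₀) := rfl
      rw [happ] at h5
      have h9 : (δ/8) * ‖(σ * t) • Ac‖ ≤ (δ/8) * t :=
        mul_le_mul_of_nonneg_left hnA (by positivity)
      calc ‖T₀ + (σ * t) • Ac‖ ≤ ‖y₀ + (σ * t) • (Ac x₀)‖ + (δ/8) * ‖(σ * t) • Ac‖ + γ := h5
      _ ≤ ‖y₀ + (σ * t) • (Ac x₀)‖ + (δ/8) * t + γ := by linarith
    have hAcx : ‖Ac x₀‖ ≤ 1 := by
      calc ‖Ac x₀‖ ≤ ‖Ac‖ * ‖x₀‖ := Ac.le_opNorm x₀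
      _ ≤ 1 * 1 := mul_le_mul hAcn hx₀1 (norm_nonneg _) zero_le_one
      _ = 1 := one_mul _
    have hvt : ‖t • (Ac x₀)‖ ≤ t := by
      rw [norm_smul t (Ac x₀), Real.norm_eq_abs, abs_of_pos ht0]
      calc t * ‖Ac x₀‖ ≤ t * 1 := mul_le_mul_of_nonneg_left hAcx (le_of_lt ht0)
      _ = t := mul_one t
    have hv : ‖t • (Ac x₀)‖ ≤ ρ := le_trans hvt htρ
    have hsumY : ‖y₀ + t • (Ac x₀)‖ + ‖y₀ - t • (Ac x₀)‖ ≤ 2 + (δ/8) * t := by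
      have h5 := hsmY (t • (Ac x₀)) hv
      have h6 : (δ/8) * ‖t • (Ac x₀)‖ ≤ (δ/8) * t :=
        mul_le_mul_of_nonneg_left hvt (by positivity)
      linarith
    -- combine into operator norms
    have hone : ‖T₀ + t • Ac‖ ≤ ‖y₀ + t • (Ac x₀)‖ + (δ/8) * t + γ := by
      have := hbound 1 (Or.inl rfl)
      simpa using this
    have htwo : ‖T₀ - t • Ac‖ ≤ ‖y₀ - t • (Ac x₀)‖ + (δ/8) * t + γ := by
      have h7 := hbound (-1) (Or.inr rfl)
      have e1 : T₀ + ((-1) * t) • Ac = T₀ - t • Ac := by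
        rw [neg_one_mul, neg_smul, ← sub_eq_add_neg]
      have e2 : y₀ + ((-1) * t) • (Ac x₀) = y₀ - t • (Ac x₀) := by
        rw [neg_one_mul, neg_smul, ← sub_eq_add_neg]
      rw [e1, e2] at h7
      exact h7
    -- lower bound via the pair
    have hlow : φ₁ (T₀h + t • A) + φ₂ (T₀h - t • A) ≤
        ‖T₀ + t • Ac‖ + ‖T₀ - t • Ac‖ := by
      have c1 : ((T₀h + t • A : H) : X →L[ℝ] Y) = T₀ + t • Ac := by
        rw [Submodule.coe_add, SetLike.val_smul]
      have c2 : ((T₀h - t • A : H) : X →L[ℝ] Y) = T₀ - t • Ac := by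
        rw [Submodule.coe_sub, SetLike.val_smul]
      have b1 : φ₁ (T₀h + t • A) ≤ ‖T₀ + t • Ac‖ := by
        calc φ₁ (T₀h + t • A) ≤ ‖((T₀h + t • A : H) : X →L[ℝ] Y)‖ := hφbound φ₁ hφ₁b _
        _ = ‖T₀ + t • Ac‖ := by rw [c1]
      have b2 : φ₂ (T₀h - t • A) ≤ ‖T₀ - t • Ac‖ := by
        calc φ₂ (T₀h - t • A) ≤ ‖((T₀h - t • A : H) : X →L[ℝ] Y)‖ := hφbound φ₂ hφ₂b _
        _ = ‖T₀ - t • Ac‖ := by rw [c2]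
      linarith
    have hexp : φ₁ (T₀h + t • A) + φ₂ (T₀h - t • A) =
        φ₁ T₀h + φ₂ T₀h + t * ((φ₁ - φ₂) A) := by
      rw [map_add, map_sub, map_smul, map_smul]
      show φ₁ T₀h + t * φ₁ A + (φ₂ T₀h - t * φ₂ A) = φ₁ T₀h + φ₂ T₀h + t * (φ₁ A - φ₂ A)
      ring
    have hfinal : t * ((φ₁ - φ₂) A) ≤ (3*δ/8) * t + 4 * γ := by
      have h5 := hlow
      rw [hexp] at h5
      linarith [hone, htwo, hsumY, hφ₁a, hφ₂a]
    have hlow2 : t * (δ - δ/8) < t * ((φ₁ - φ₂) A) :=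
      mul_lt_mul_of_pos_left hA2 ht0
    have hcontra : t * (δ - δ/8) < t * (5*δ/8) := by
      calc t * (δ - δ/8) < t * ((φ₁ - φ₂) A) := hlow2
      _ ≤ (3*δ/8) * t + 4 * γ := hfinal
      _ = (3*δ/8) * t + 4 * ((δ/16) * t) := by rw [hγdef]
      _ = t * (5*δ/8) := by ring
    have hcontra2 : δ - δ/8 < 5*δ/8 := lt_of_mul_lt_mul_left hcontra (le_of_lt ht0)
    linarith
  · -- span ≠ ⊤: main construction
    set ε₁ := ε/16 with hε₁def
    have hε₁0 : 0 < ε₁ := by positivity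
    obtain ⟨x', r, hx'1, hr0, hr12, hsm⟩ := hXdata ε₁ hε₁0
    set t := r/8 with htdef
    have ht0 : 0 < t := by positivity
    have ht16 : t ≤ 1/16 := by rw [htdef]; linarith
    set ε' := ε₁ * t with hε'def
    have hε'0 : 0 < ε' := by positivity
    have hε₁2 : ε₁ < 2 := by
      rw [hε₁def]; linarith
    have hε'small : ε' < 1/2 := by
      rw [hε'def]
      calc ε₁ * t ≤ ε₁ * (1/16) := mul_le_mul_of_nonneg_left ht16 (le_of_lt hε₁0)
      _ < 2 * (1/16) := by linarith
      _ ≤ 1/2 := by norm_num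
    set β := 2 * ε₁ * t with hβdef
    have hβ0 : 0 < β := by positivity
    set γ := min (ε₁ * t) c₀ with hγdef
    have hγ0 : 0 < γ := lt_min (by positivity) hc₀
    have hγε : γ ≤ ε₁ * t := min_le_left _ _
    have hγc₀ : γ ≤ c₀ := min_le_right _ _
    have hγβ : γ < β := by
      have h5 : ε₁ * t < 2 * ε₁ * t := by nlinarith [mul_pos hε₁0 ht0]
      calc γ ≤ ε₁ * t := hγε
      _ < 2 * ε₁ * t := h5
      _ = β := hβdef.symm
    have hγ1 : γ < 1/2 := by
      calc γ ≤ ε₁ * t := hγε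
      _ = ε' := hε'def.symm
      _ < 1/2 := hε'small
    -- recenter: find g with ‖g‖ close to 1 agreeing with f₀ on I
    obtain ⟨g, hg1, hg2, hgz⟩ : ∃ g : StrongDual ℝ Y,
        ‖g‖ ≤ 1 ∧ 1 - ε' < ‖g‖ ∧ ∀ z ∈ I, g z = f₀ z := by
      by_cases hf₀n : 1 - ε'/2 < ‖f₀‖
      · exact ⟨f₀, hf₀b', by linarith, fun z _ => rfl⟩
      · push_neg at hf₀n
        obtain ⟨Λ, hΛ1, hΛ2⟩ := exists_ann_functional' I hsp
        set F : ℝ → ℝ := fun s => ‖f₀ + s • Λ‖ with hFdef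
        have hFcont : ContinuousOn F (Set.Icc 0 3) := by
          apply Continuous.continuousOn
          exact (continuous_const.add ((continuous_id.smul continuous_const))).norm
        have hF0 : F 0 ≤ 1 - ε'/2 := by
          show ‖f₀ + (0:ℝ) • Λ‖ ≤ 1 - ε'/2
          rw [zero_smul, add_zero]
          exact hf₀n
        have hF3 : 1 - ε'/2 ≤ F 3 := by
          show 1 - ε'/2 ≤ ‖f₀ + (3:ℝ) • Λ‖
          have h5 : ‖(3:ℝ) • Λ‖ ≤ ‖f₀ + (3:ℝ) • Λ‖ + ‖f₀‖ := by
            calc ‖(3:ℝ) • Λ‖ = ‖(f₀ + (3:ℝ) • Λ) - f₀‖ := by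
                  rw [add_sub_cancel_left]
            _ ≤ ‖f₀ + (3:ℝ) • Λ‖ + ‖f₀‖ := norm_sub_le _ _
          have h6 : ‖(3:ℝ) • Λ‖ = 3 := by
            rw [norm_smul (3:ℝ) Λ, Real.norm_eq_abs, hΛ1]
            norm_num
          rw [h6] at h5
          linarith
        have hmem' : (1 - ε'/2) ∈ Set.Icc (F 0) (F 3) := ⟨hF0, hF3⟩
        obtain ⟨s₀, hs₀I, hs₀⟩ := intermediate_value_Icc (by norm_num : (0:ℝ) ≤ 3)
          hFcont hmem'
        refine ⟨f₀ + s₀ • Λ, ?_, ?_, ?_⟩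
        · rw [show ‖f₀ + s₀ • Λ‖ = F s₀ from rfl, hs₀]
          linarith
        · rw [show ‖f₀ + s₀ • Λ‖ = F s₀ from rfl, hs₀]
          linarith
        · intro z hz
          show f₀ z + s₀ • Λ z = f₀ z
          rw [hΛ2 z hz]
          simp
    -- norming direction e₀ for g
    obtain ⟨y', hy'1, hy'2⟩ := exists_unit_vector_big' g (1 - ε') (by linarith) hg2
    have hy'pos : 0 < g y' := by linarith
    have hy'ne : y' ≠ 0 := by
      intro h
      rw [h, map_zero] at hy'pos
      exact lt_irrefl _ hy'pos
    have hy'n : 0 < ‖y'‖ := norm_pos_iff.mpr hy'ne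
    set e₀ := ‖y'‖⁻¹ • y' with he₀def
    have he₀1 : ‖e₀‖ = 1 := by
      rw [he₀def, norm_smul, Real.norm_eq_abs, abs_of_pos (inv_pos.mpr hy'n),
        inv_mul_cancel₀ (ne_of_gt hy'n)]
    have he₀2 : 1 - ε' < g e₀ := by
      have h5 : g e₀ = ‖y'‖⁻¹ * g y' := by rw [he₀def, map_smul]; rfl
      have h6 : g y' ≤ g e₀ := by
        rw [h5]
        have h7 : 1 ≤ ‖y'‖⁻¹ := by
          rw [le_inv_comm₀ zero_lt_one hy'n]
          simpa using hy'1
        nlinarith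
      linarith
    have he₀3 : g e₀ ≤ 1 := by
      calc g e₀ ≤ |g e₀| := le_abs_self _
      _ ≤ ‖g‖ * ‖e₀‖ := g.le_opNorm e₀
      _ ≤ 1 * 1 := mul_le_mul hg1 (le_of_eq he₀1) (norm_nonneg _) zero_le_one
      _ = 1 := one_mul _
    -- the near-norming point x₀ of x'
    obtain ⟨x₀, hx₀1, hx₀2⟩ := exists_unit_vector_big' x' (1 - γ) (by linarith)
      (by rw [hx'1]; linarith)
    have hx₀3 : x' x₀ ≤ 1 := by
      calc x' x₀ ≤ |x' x₀| := le_abs_self _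
      _ ≤ ‖x'‖ * ‖x₀‖ := x'.le_opNorm x₀
      _ ≤ 1 * 1 := by rw [hx'1]; exact mul_le_mul_of_nonneg_left hx₀1 zero_le_one
      _ = 1 := one_mul _
    -- rank-one operators
    set Tz : Y → H := fun z => ⟨x'.smulRight z, hrk x' z⟩ with hTzdef
    set E₀h : H := Tz e₀ with hE₀def
    have hE₀n : ‖E₀h‖ = 1 := by
      show ‖x'.smulRight e₀‖ = 1
      rw [ContinuousLinearMap.norm_smulRight_apply, hx'1, he₀1, one_mul]
    -- the base functional Φg on H
    set Φℓ : H →ₗ[ℝ] ℝ :=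
      { toFun := fun T => g ((T : X →L[ℝ] Y) x₀)
        map_add' := by intro a b; simp
        map_smul' := by intro c a; simp } with hΦℓdef
    have hΦbd : ∀ T : H, ‖Φℓ T‖ ≤ 1 * ‖T‖ := by
      intro T
      show |g ((T : X →L[ℝ] Y) x₀)| ≤ 1 * ‖T‖
      calc |g ((T : X →L[ℝ] Y) x₀)| ≤ ‖g‖ * ‖(T : X →L[ℝ] Y) x₀‖ := g.le_opNorm _
      _ ≤ 1 * (‖(T : X →L[ℝ] Y)‖ * ‖x₀‖) := by
          apply mul_le_mul hg1 ((T : X →L[ℝ] Y).le_opNorm x₀) (norm_nonneg _) zero_le_one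
      _ ≤ 1 * (‖(T : X →L[ℝ] Y)‖ * 1) := by
          have := (T : X →L[ℝ] Y).opNorm_nonneg
          nlinarith
      _ = 1 * ‖T‖ := by rw [mul_one]; rfl
    set Φg : DualH H := Φℓ.mkContinuous 1 hΦbd with hΦgdef
    have hΦgn : ‖Φg‖ ≤ 1 :=
      ContinuousLinearMap.opNorm_le_bound (Φg : DualH H) zero_le_one (fun T => hΦbd T)
    have hΦgapp : ∀ T : H, Φg T = g ((T : X →L[ℝ] Y) x₀) := fun T => rfl
    -- the open set in the weak* topology of H's dual
    set VH : Set (WeakDual ℝ H) :=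
      (⋂ z ∈ I, (fun χ : WeakDual ℝ H => χ (Tz z)) ⁻¹' (Metric.ball (g z) (αf z))) ∩
        ((fun χ : WeakDual ℝ H => χ E₀h) ⁻¹' (Set.Ioi (g e₀ - β))) with hVHdef
    have hVHopen : IsOpen VH := by
      apply IsOpen.inter
      · apply isOpen_biInter_finset
        intro z _
        exact (Metric.isOpen_ball).preimage (WeakDual.eval_continuous _)
      · exact (isOpen_Ioi).preimage (WeakDual.eval_continuous _)
    set UH := {f : DualH H | ‖f‖ ≤ 1} ∩
      {f : DualH H | StrongDual.toWeakDual f ∈ VH} with hUHdef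
    have hΦgVH : Φg ∈ UH := by
      constructor
      · exact hΦgn
      · show StrongDual.toWeakDual Φg ∈ VH
        constructor
        · rw [Set.mem_iInter₂]
          intro z hz
          show Φg (Tz z) ∈ Metric.ball (g z) (αf z)
          rw [Metric.mem_ball, Real.dist_eq, hΦgapp]
          show |g ((x'.smulRight z) x₀) - g z| < αf z
          have h5 : (x'.smulRight z) x₀ = x' x₀ • z := rfl
          rw [h5]
          have h6 : g (x' x₀ • z) = x' x₀ * g z := by rw [map_smul]; rfl
          rw [h6]
          have h7 : |x' x₀ * g z - g z| = |x' x₀ - 1| * |g z| := by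
            rw [← abs_mul]; ring_nf
          rw [h7]
          have h8 : |x' x₀ - 1| ≤ γ := by
            rw [abs_le]
            constructor <;> linarith
          have h9 : |g z| ≤ ‖z‖ := by
            calc |g z| ≤ ‖g‖ * ‖z‖ := g.le_opNorm z
            _ ≤ 1 * ‖z‖ := mul_le_mul_of_nonneg_right hg1 (norm_nonneg z)
            _ = ‖z‖ := one_mul _
          calc |x' x₀ - 1| * |g z| ≤ γ * ‖z‖ := by
                apply mul_le_mul h8 h9 (abs_nonneg _) (by linarith)
          _ ≤ c₀ * ‖z‖ := mul_le_mul_of_nonneg_right hγc₀ (norm_nonneg z)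
          _ < αf z := hc₀z z hz
        · show Φg E₀h ∈ Set.Ioi (g e₀ - β)
          rw [Set.mem_Ioi, hΦgapp]
          show g e₀ - β < g ((x'.smulRight e₀) x₀)
          have h5 : (x'.smulRight e₀) x₀ = x' x₀ • e₀ := rfl
          rw [h5]
          have h6 : g (x' x₀ • e₀) = x' x₀ * g e₀ := by rw [map_smul]; rfl
          rw [h6]
          have hge₀pos : 0 < g e₀ := by linarith
          nlinarith
    have hdiamH := hH VH hVHopen UH rfl ⟨Φg, hΦgVH⟩
    obtain ⟨φ₁, hφ₁, φ₂, hφ₂, S, hS1, hS2⟩ := pair_of_diam' UH (δ - ε₁)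
      (by linarith) (lt_of_lt_of_le (by linarith) hdiamH)
    have hφ₁b : ‖(φ₁ : DualH H)‖ ≤ 1 := hφ₁.1
    have hφ₂b : ‖(φ₂ : DualH H)‖ ≤ 1 := hφ₂.1
    have hφ₁V : StrongDual.toWeakDual φ₁ ∈ VH := hφ₁.2
    have hφ₂V : StrongDual.toWeakDual φ₂ ∈ VH := hφ₂.2
    have hφz : ∀ z ∈ I, |φ₁ (Tz z) - g z| < αf z ∧ |φ₂ (Tz z) - g z| < αf z := by
      intro z hz
      constructor
      · have h5 := Set.mem_iInter₂.mp hφ₁V.1 z hz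
        rwa [Set.mem_preimage, Metric.mem_ball, Real.dist_eq] at h5
      · have h5 := Set.mem_iInter₂.mp hφ₂V.1 z hz
        rwa [Set.mem_preimage, Metric.mem_ball, Real.dist_eq] at h5
    have hφ₁a : g e₀ - β < φ₁ E₀h := hφ₁V.2
    have hφ₂a : g e₀ - β < φ₂ E₀h := hφ₂V.2
    have hφ₁a' : φ₁ E₀h ≤ 1 := by
      calc φ₁ E₀h ≤ |φ₁ E₀h| := le_abs_self _
      _ ≤ ‖φ₁‖ * ‖E₀h‖ := φ₁.le_opNorm _
      _ ≤ 1 * 1 := mul_le_mul hφ₁b (le_of_eq hE₀n) (norm_nonneg _) zero_le_one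
      _ = 1 := one_mul _
    -- the witness vector in Y
    set Sc : X →L[ℝ] Y := (S : X →L[ℝ] Y) with hScdef
    have hScn : ‖Sc‖ ≤ 1 := hS1
    set y := Sc x₀ with hydef
    have hyn : ‖y‖ ≤ 1 := by
      calc ‖y‖ ≤ ‖Sc‖ * ‖x₀‖ := Sc.le_opNorm x₀
      _ ≤ 1 * 1 := mul_le_mul hScn hx₀1 (norm_nonneg _) zero_le_one
      _ = 1 := one_mul _
    set Rh : H := Tz y with hRhdef
    have hRn : ‖(Rh : X →L[ℝ] Y)‖ ≤ 1 := by
      show ‖x'.smulRight y‖ ≤ 1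
      rw [ContinuousLinearMap.norm_smulRight_apply, hx'1, one_mul]
      exact hyn
    set Dh : H := S - Rh with hDhdef
    set Dc : X →L[ℝ] Y := Sc - x'.smulRight y with hDcdef
    have hDcoe : ((Dh : H) : X →L[ℝ] Y) = Dc := rfl
    have hDn : ‖Dc‖ ≤ 2 := by
      calc ‖Dc‖ ≤ ‖Sc‖ + ‖x'.smulRight y‖ := norm_sub_le _ _
      _ ≤ 1 + 1 := add_le_add hScn hRn
      _ = 2 := by norm_num
    have hDx₀ : ‖Dc x₀‖ ≤ γ := by
      have h5 : Dc x₀ = y - x' x₀ • y := rfl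
      have h6 : y - x' x₀ • y = (1 - x' x₀) • y := by
        rw [sub_smul, one_smul]
      rw [h5, h6, norm_smul (1 - x' x₀) y, Real.norm_eq_abs]
      have h7 : |1 - x' x₀| ≤ γ := by
        rw [abs_le]
        constructor <;> linarith
      calc |1 - x' x₀| * ‖y‖ ≤ γ * 1 := by
            apply mul_le_mul h7 hyn (norm_nonneg _) (by linarith)
      _ = γ := mul_one _
    -- smoothness bound applied to E₀h ± t • Dh
    have hbound : ∀ σ : ℝ, σ = 1 ∨ σ = -1 →
        ‖x'.smulRight e₀ + (σ * t) • Dc‖ ≤ 1 + t * γ + ε₁ * (2 * t) + γ := by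
      intro σ hσ
      have hσ1 : |σ| = 1 := by rcases hσ with rfl | rfl <;> simp
      have hnA : ‖(σ * t) • Dc‖ ≤ 2 * t := by
        rw [norm_smul (σ * t) Dc, Real.norm_eq_abs, abs_mul, hσ1, one_mul, abs_of_pos ht0]
        calc t * ‖Dc‖ ≤ t * 2 := mul_le_mul_of_nonneg_left hDn (le_of_lt ht0)
        _ = 2 * t := by ring
      have hnA4 : ‖(σ * t) • Dc‖ ≤ r/4 := by
        calc ‖(σ * t) • Dc‖ ≤ 2 * t := hnA
        _ = r/4 := by rw [htdef]; ring
      have h5 := key_smooth' x' hx'1 r ε₁ γ hr0 hr12 hε₁0 hγ0 hsm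
        x₀ hx₀1 hx₀2 e₀ he₀1 ((σ * t) • Dc) hnA4
      have h6 : ‖e₀ + ((σ * t) • Dc) x₀‖ ≤ 1 + t * γ := by
        have happ : ((σ * t) • Dc) x₀ = (σ * t) • (Dc x₀) := rfl
        rw [happ]
        calc ‖e₀ + (σ * t) • (Dc x₀)‖ ≤ ‖e₀‖ + ‖(σ * t) • (Dc x₀)‖ := norm_add_le _ _
        _ ≤ 1 + t * γ := by
            rw [he₀1, norm_smul (σ * t) (Dc x₀), Real.norm_eq_abs, abs_mul, hσ1, one_mul,
              abs_of_pos ht0]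
            have h8 : t * ‖Dc x₀‖ ≤ t * γ := mul_le_mul_of_nonneg_left hDx₀ (le_of_lt ht0)
            linarith
      have h9 : ε₁ * ‖(σ * t) • Dc‖ ≤ ε₁ * (2 * t) :=
        mul_le_mul_of_nonneg_left hnA (le_of_lt hε₁0)
      calc ‖x'.smulRight e₀ + (σ * t) • Dc‖ ≤
            ‖e₀ + ((σ * t) • Dc) x₀‖ + ε₁ * ‖(σ * t) • Dc‖ + γ := h5
      _ ≤ 1 + t * γ + ε₁ * (2 * t) + γ := by linarith
    -- derive the bound on (φ₁ - φ₂) Dh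
    have hboundp : ‖x'.smulRight e₀ + t • Dc‖ ≤ 1 + t * γ + ε₁ * (2 * t) + γ := by
      have h5 := hbound 1 (Or.inl rfl)
      rwa [one_mul] at h5
    have hboundm : ‖x'.smulRight e₀ - t • Dc‖ ≤ 1 + t * γ + ε₁ * (2 * t) + γ := by
      have h5 := hbound (-1) (Or.inr rfl)
      rwa [neg_one_mul, neg_smul, ← sub_eq_add_neg] at h5
    have hcoe1 : ((E₀h + t • Dh : H) : X →L[ℝ] Y) = x'.smulRight e₀ + t • Dc := by
      rw [Submodule.coe_add, SetLike.val_smul, hDcoe]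
    have hcoe2 : ((E₀h - t • Dh : H) : X →L[ℝ] Y) = x'.smulRight e₀ - t • Dc := by
      rw [Submodule.coe_sub, SetLike.val_smul, hDcoe]
    have hone : φ₁ (E₀h + t • Dh) ≤ 1 + t * γ + ε₁ * (2 * t) + γ := by
      calc φ₁ (E₀h + t • Dh) ≤ ‖((E₀h + t • Dh : H) : X →L[ℝ] Y)‖ := hφbound φ₁ hφ₁b _
      _ = ‖x'.smulRight e₀ + t • Dc‖ := by rw [hcoe1]
      _ ≤ 1 + t * γ + ε₁ * (2 * t) + γ := hboundp
    have htwo : φ₂ (E₀h - t • Dh) ≤ 1 + t * γ + ε₁ * (2 * t) + γ := by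
      calc φ₂ (E₀h - t • Dh) ≤ ‖((E₀h - t • Dh : H) : X →L[ℝ] Y)‖ := hφbound φ₂ hφ₂b _
      _ = ‖x'.smulRight e₀ - t • Dc‖ := by rw [hcoe2]
      _ ≤ 1 + t * γ + ε₁ * (2 * t) + γ := hboundm
    have hexp : φ₁ (E₀h + t • Dh) + φ₂ (E₀h - t • Dh) =
        φ₁ E₀h + φ₂ E₀h + t * ((φ₁ - φ₂) Dh) := by
      rw [map_add, map_sub, map_smul, map_smul]
      show φ₁ E₀h + t * φ₁ Dh + (φ₂ E₀h - t * φ₂ Dh) =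
        φ₁ E₀h + φ₂ E₀h + t * (φ₁ Dh - φ₂ Dh)
      ring
    have hφ₂ae : g e₀ - β < φ₂ E₀h := hφ₂a
    have hDbound : t * ((φ₁ - φ₂) Dh) ≤ 13 * ε₁ * t := by
      have h5 : φ₁ E₀h + φ₂ E₀h + t * ((φ₁ - φ₂) Dh) ≤
          2 * (1 + t * γ + ε₁ * (2 * t) + γ) := by
        rw [← hexp]
        linarith [hone, htwo]
      have h6 : 2 * (g e₀ - β) < φ₁ E₀h + φ₂ E₀h := by linarith
      have h7 : 2 * (1 - ε') - 2 * β < φ₁ E₀h + φ₂ E₀h := by linarith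
      have h8 : t * ((φ₁ - φ₂) Dh) ≤ 2 * t * γ + 4 * ε₁ * t + 2 * γ + 2 * ε' + 2 * β := by
        linarith
      have h9 : 2 * t * γ ≤ 2 * t * (ε₁ * t) := by
        have := mul_le_mul_of_nonneg_left hγε (by positivity : (0:ℝ) ≤ 2 * t)
        linarith
      have h10 : 2 * γ ≤ 2 * (ε₁ * t) := by linarith
      have h11 : 2 * t * (ε₁ * t) ≤ ε₁ * t := by
        have ht1 : 2 * t ≤ 1 := by
          rw [htdef]; linarith
        have := mul_le_mul_of_nonneg_right ht1 (by positivity : (0:ℝ) ≤ ε₁ * t)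
        calc 2 * t * (ε₁ * t) ≤ 1 * (ε₁ * t) := this
        _ = ε₁ * t := one_mul _
      have h12 : 2 * ε' ≤ 2 * (ε₁ * t) := by rw [hε'def]
      have h13 : 2 * β ≤ 4 * (ε₁ * t) := by rw [hβdef]; ring_nf; linarith [le_refl (ε₁ * t)]
      linarith
    have hDb2 : (φ₁ - φ₂) Dh ≤ 13 * ε₁ := by
      have h5 : t * ((φ₁ - φ₂) Dh) ≤ t * (13 * ε₁) := by linarith [hDbound]
      exact le_of_mul_le_mul_left h5 ht0
    have hSsplit : (φ₁ - φ₂) S = (φ₁ - φ₂) Rh + (φ₁ - φ₂) Dh := by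
      rw [hDhdef, map_sub]
      ring
    have hRbig : δ - 14 * ε₁ < (φ₁ - φ₂) Rh := by
      have := hS2
      rw [hSsplit] at this
      linarith
    -- transfer the pair to Y
    obtain ⟨f₁, hf₁n, hf₁app⟩ := dual_transfer' H x' hx'1 (hrk x') φ₁ hφ₁b
    obtain ⟨f₂, hf₂n, hf₂app⟩ := dual_transfer' H x' hx'1 (hrk x') φ₂ hφ₂b
    have hf₁U : f₁ ∈ U := by
      apply memU f₁ hf₁n
      intro z hz
      rw [hf₁app]
      have h5 : f₀ z = g z := (hgz z hz).symm
      rw [h5]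
      exact (hφz z hz).1
    have hf₂U : f₂ ∈ U := by
      apply memU f₂ hf₂n
      intro z hz
      rw [hf₂app]
      have h5 : f₀ z = g z := (hgz z hz).symm
      rw [h5]
      exact (hφz z hz).2
    have hfeval : (f₁ - f₂) y = (φ₁ - φ₂) Rh := by
      show f₁ y - f₂ y = φ₁ Rh - φ₂ Rh
      rw [hf₁app, hf₂app]
    have hnormdiff : (f₁ - f₂) y ≤ ‖f₁ - f₂‖ := by
      calc (f₁ - f₂) y ≤ |(f₁ - f₂) y| := le_abs_self _
      _ ≤ ‖f₁ - f₂‖ * ‖y‖ := (f₁ - f₂).le_opNorm y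
      _ ≤ ‖f₁ - f₂‖ * 1 := by
          exact mul_le_mul_of_nonneg_left hyn (norm_nonneg _)
      _ = ‖f₁ - f₂‖ := mul_one _
    have hdistU : δ - 14 * ε₁ ≤ Metric.diam U := by
      have h5 : δ - 14 * ε₁ < (f₁ - f₂) y := by rw [hfeval]; exact hRbig
      have h6 : ‖f₁ - f₂‖ ≤ Metric.diam U := by
        rw [← dist_eq_norm]
        exact Metric.dist_le_diam_of_mem hUbdd hf₁U hf₂U
      linarith
    have h14 : 14 * ε₁ ≤ ε := by rw [hε₁def]; linarith
    linarith
end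

section
/- Let X and Y be nontrivial real Banach spaces, let H be a closed linear subspace of L(X,Y) containing all finite rank operators, and let δ > 0. If H (with the induced operator norm) is weakly δ-average rough and Y is non-rough, then the dual space X* is weakly δ-average rough. -/
set_option synthInstance.maxHeartbeats 1000000
set_option maxHeartbeats 4000000
set_option linter.unusedVariables false

open NormedSpace


open scoped BigOperators

noncomputable instance instDDnacg {X : Type*} [NormedAddCommGroup X] [NormedSpace ℝ X] :
    NormedAddCommGroup (StrongDual ℝ (StrongDual ℝ X)) := inferInstance

noncomputable instance instDDns {X : Type*} [NormedAddCommGroup X] [NormedSpace ℝ X] :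
    NormedSpace ℝ (StrongDual ℝ (StrongDual ℝ X)) := inferInstance

section Auxiliary

@[reducible]
noncomputable def instSubNacg {X Y : Type*} [NormedAddCommGroup X] [NormedSpace ℝ X]
    [NormedAddCommGroup Y] [NormedSpace ℝ Y] {H : Submodule ℝ (X →L[ℝ] Y)} :
    NormedAddCommGroup H := inferInstance

@[reducible]
noncomputable def instSubNs {X Y : Type*} [NormedAddCommGroup X] [NormedSpace ℝ X]
    [NormedAddCommGroup Y] [NormedSpace ℝ Y] {H : Submodule ℝ (X →L[ℝ] Y)} :
    NormedSpace ℝ H := inferInstance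

attribute [local instance] instSubNacg instSubNs

lemma weakdual_basic {Z : Type*} [NormedAddCommGroup Z] [NormedSpace ℝ Z]
    {V : Set (WeakDual ℝ Z)} (hV : IsOpen V) {ψ₀ : WeakDual ℝ Z} (hmem : ψ₀ ∈ V) :
    ∃ (n : ℕ) (v : Fin n → Z) (α : ℝ), 0 < α ∧
      {ψ : WeakDual ℝ Z | ∀ i, |ψ (v i) - ψ₀ (v i)| < α} ⊆ V := by
  obtain ⟨t, ht, htV⟩ := isOpen_induced_iff.mp hV
  have hmem' : (fun z => (topDualPairing ℝ Z) ψ₀ z) ∈ t := by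
    rw [← htV] at hmem; exact hmem
  obtain ⟨I, u, hu, hsub⟩ := isOpen_pi_iff.mp ht _ hmem'
  by_cases hI : I.Nonempty
  · have hch : ∀ a : I, ∃ ε : ℝ, 0 < ε ∧ Metric.ball ((topDualPairing ℝ Z) ψ₀ (a : Z)) ε ⊆ u a := by
      intro a
      obtain ⟨ho, hm⟩ := hu a a.2
      obtain ⟨ε, hε, hball⟩ := Metric.isOpen_iff.mp ho _ hm
      exact ⟨ε, hε, hball⟩
    choose ε hε hball using hch
    set n := I.card with hn
    have e : Fin n ≃ I := (I.equivFin).symm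
    have hne : (Finset.univ : Finset (Fin n)).Nonempty := by
      apply Finset.univ_nonempty_iff.mpr
      apply Fin.pos_iff_nonempty.mp
      simpa [hn, Finset.card_pos] using hI
    refine ⟨n, fun i => (e i : Z), Finset.univ.inf' hne (fun i => ε (e i)), ?_, ?_⟩
    · exact Finset.lt_inf'_iff _ |>.mpr (fun i _ => hε (e i))
    · intro ψ hψ
      have hmemt : (fun z => (topDualPairing ℝ Z) ψ z) ∈ t := by
        apply hsub
        intro a ha
        have h1 := hψ (e.symm ⟨a, ha⟩)
        have h2 : Finset.univ.inf' hne (fun i => ε (e i)) ≤ ε ⟨a, ha⟩ := by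
          have h3 := Finset.inf'_le (fun i => ε (e i)) (Finset.mem_univ (e.symm ⟨a, ha⟩))
          simp only [Equiv.apply_symm_apply] at h3
          exact h3
        apply hball ⟨a, ha⟩
        rw [Metric.mem_ball, Real.dist_eq]
        simp only [Equiv.apply_symm_apply] at h1
        exact lt_of_lt_of_le h1 h2
      rw [← htV]; exact hmemt
  · refine ⟨0, fun _ => 0, 1, one_pos, ?_⟩
    intro ψ _
    rw [← htV]
    apply hsub
    intro a ha
    exact absurd ⟨a, ha⟩ hI

lemma smooth_point {Y : Type*} [NormedAddCommGroup Y] (hY : NonRough Y) {ε : ℝ} (hε : 0 < ε) :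
    ∃ (y₀ : Y) (η : ℝ), ‖y₀‖ = 1 ∧ 0 < η ∧ η ≤ 1 ∧
      ∀ v : Y, ‖v‖ ≤ η → ‖y₀ + v‖ + ‖y₀ - v‖ ≤ 2 + ε * ‖v‖ := by
  have h1 : ¬ IsRough Y ε := fun h => hY ⟨ε, hε, h⟩
  unfold IsRough at h1
  push_neg at h1
  obtain ⟨y₀, hy₀, ε', hε', η₀, hη₀, hy⟩ := h1
  refine ⟨y₀, min (η₀ / 2) 1, hy₀, by positivity, min_le_right _ _, ?_⟩
  intro v hv
  rcases eq_or_ne v 0 with rfl | hvne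
  · simp [hy₀]; norm_num
  · have hvpos : 0 < ‖v‖ := norm_pos_iff.mpr hvne
    have hvlt : ‖v‖ < η₀ := lt_of_le_of_lt hv (by
      calc min (η₀ / 2) 1 ≤ η₀ / 2 := min_le_left _ _
      _ < η₀ := by linarith)
    have h2 := hy v hvpos hvlt
    have h3 : (ε - ε') * ‖v‖ ≤ ε * ‖v‖ := by nlinarith
    linarith


lemma knb {X Y : Type*} [NormedAddCommGroup X] [NormedSpace ℝ X]
    [NormedAddCommGroup Y] [NormedSpace ℝ Y]
    {y₀ : Y} {g₀ : Y →L[ℝ] ℝ} (hy₀ : ‖y₀‖ = 1) (hg₀ : ‖g₀‖ = 1) (hg₀y₀ : g₀ y₀ = 1)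
    {ε η : ℝ} (hε : 0 < ε) (hη : 0 < η) (hη1 : η ≤ 1)
    (hsm : ∀ v : Y, ‖v‖ ≤ η → ‖y₀ + v‖ + ‖y₀ - v‖ ≤ 2 + ε * ‖v‖)
    (e : X →L[ℝ] ℝ) (he : ‖e‖ ≤ 1)
    (S : X →L[ℝ] Y) (hS : ∀ x, g₀ (S x) = 0)
    {t : ℝ} (ht0 : 0 ≤ t) (ht : t * ‖S‖ ≤ η / 2) :
    ‖e.smulRight y₀ + t • S‖ ≤ 1 + ε * (t * ‖S‖) := by
  have hSnn : (0:ℝ) ≤ ‖S‖ := norm_nonneg _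
  apply ContinuousLinearMap.opNorm_le_bound
  · positivity
  intro x
  have hxnn : (0:ℝ) ≤ ‖x‖ := norm_nonneg _
  have hSx : ‖S x‖ ≤ ‖S‖ * ‖x‖ := S.le_opNorm x
  have hcx : |e x| ≤ ‖x‖ := by
    calc |e x| = ‖e x‖ := rfl
    _ ≤ ‖e‖ * ‖x‖ := e.le_opNorm x
    _ ≤ 1 * ‖x‖ := by nlinarith
    _ = ‖x‖ := one_mul _
  simp only [ContinuousLinearMap.add_apply, ContinuousLinearMap.smulRight_apply,
    ContinuousLinearMap.coe_smul', Pi.smul_apply]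
  rcases le_or_gt (‖x‖ / 2) |e x| with hc | hc
  · rcases ne_or_eq x 0 with hxne | rfl
    swap
    · simp
    have hxpos : 0 < ‖x‖ := norm_pos_iff.mpr hxne
    have hcne : e x ≠ 0 := by
      intro h0
      rw [h0] at hc; simp at hc; linarith
    have hcpos : 0 < |e x| := abs_pos.mpr hcne
    set c := e x with hcdef
    set v := (t / c) • S x with hvdef
    have hvnorm : ‖v‖ = (t / |c|) * ‖S x‖ := by
      rw [hvdef, norm_smul]
      congr 1
      rw [Real.norm_eq_abs, abs_div, abs_of_nonneg ht0]
    have hvle : ‖v‖ ≤ η := by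
      rw [hvnorm]
      have h2 : t / |c| ≤ t / (‖x‖ / 2) := by
        apply div_le_div_of_nonneg_left ht0 (by positivity) hc
      have h2' : (t / (‖x‖ / 2)) * (‖S‖ * ‖x‖) = 2 * (t * ‖S‖) := by
        field_simp
      calc (t / |c|) * ‖S x‖ ≤ (t / (‖x‖ / 2)) * (‖S‖ * ‖x‖) :=
            mul_le_mul h2 hSx (norm_nonneg _) (by positivity)
      _ = 2 * (t * ‖S‖) := h2'
      _ ≤ 2 * (η / 2) := by linarith
      _ = η := by ring
    have hlower : (1:ℝ) ≤ ‖y₀ - v‖ := by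
      have h3 : g₀ (y₀ - v) = 1 := by
        rw [map_sub, hg₀y₀, hvdef, map_smul]
        simp [hS x]
      have h4 : g₀ (y₀ - v) ≤ ‖g₀‖ * ‖y₀ - v‖ := by
        calc g₀ (y₀ - v) ≤ |g₀ (y₀ - v)| := le_abs_self _
        _ = ‖g₀ (y₀ - v)‖ := rfl
        _ ≤ ‖g₀‖ * ‖y₀ - v‖ := g₀.le_opNorm _
      rw [h3, hg₀, one_mul] at h4
      exact h4
    have hupper : ‖y₀ + v‖ ≤ 1 + ε * ‖v‖ := by
      have := hsm v hvle
      linarith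
    have heq : c • y₀ + t • S x = c • (y₀ + v) := by
      rw [smul_add, hvdef, smul_smul, mul_div_cancel₀ _ hcne]
    rw [heq, norm_smul, Real.norm_eq_abs]
    have hcv : |c| * ‖v‖ = t * ‖S x‖ := by
      rw [hvnorm]
      field_simp
    calc |c| * ‖y₀ + v‖ ≤ |c| * (1 + ε * ‖v‖) :=
          mul_le_mul_of_nonneg_left hupper (abs_nonneg _)
    _ = |c| + ε * (|c| * ‖v‖) := by ring
    _ = |c| + ε * (t * ‖S x‖) := by rw [hcv]
    _ ≤ ‖x‖ + ε * (t * (‖S‖ * ‖x‖)) := by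
          nlinarith [mul_le_mul_of_nonneg_left hSx (mul_nonneg hε.le ht0)]
    _ = (1 + ε * (t * ‖S‖)) * ‖x‖ := by ring
  · calc ‖e x • y₀ + t • S x‖ ≤ ‖e x • y₀‖ + ‖t • S x‖ := norm_add_le _ _
    _ = |e x| * ‖y₀‖ + t * ‖S x‖ := by
          rw [norm_smul, norm_smul, Real.norm_eq_abs, Real.norm_eq_abs, abs_of_nonneg ht0]
    _ = |e x| + t * ‖S x‖ := by rw [hy₀, mul_one]
    _ ≤ ‖x‖ / 2 + (η / 2) * ‖x‖ := by
          nlinarith [mul_le_mul_of_nonneg_left hSx ht0, mul_le_mul_of_nonneg_right ht hxnn]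
    _ ≤ (1 + ε * (t * ‖S‖)) * ‖x‖ := by
          nlinarith [mul_le_mul_of_nonneg_right hη1 hxnn,
            mul_nonneg (mul_nonneg hε.le (mul_nonneg ht0 hSnn)) hxnn]

lemma core {X Y : Type*} [NormedAddCommGroup X] [NormedSpace ℝ X]
    [NormedAddCommGroup Y] [NormedSpace ℝ Y]
    (H : Submodule ℝ (X →L[ℝ] Y))
    (hHfin : ∀ T : X →L[ℝ] Y, FiniteDimensional ℝ (LinearMap.range (T : X →ₗ[ℝ] Y)) → T ∈ H)
    {δ : ℝ} (hδ : 0 < δ) (hH : WeaklyAverageRough H δ) (hY : NonRough Y)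
    {m : ℕ} (f : Fin m → (X →L[ℝ] ℝ)) (vals : Fin m → ℝ)
    (hex : ∀ θ : ℝ, 0 < θ → ∃ (ζ : StrongDual ℝ (StrongDual ℝ X)) (e : X →L[ℝ] ℝ),
      ‖ζ‖ ≤ 1 ∧ ‖e‖ ≤ 1 ∧ 1 - θ < ζ e ∧ ∀ i, ζ (f i) = vals i)
    {β γ : ℝ} (hβ : 0 < β) (hγ : 0 < γ) :
    ∃ z w : StrongDual ℝ (StrongDual ℝ X), ‖z‖ ≤ 1 ∧ ‖w‖ ≤ 1 ∧
      (∀ i, |z (f i) - vals i| < β) ∧ (∀ i, |w (f i) - vals i| < β) ∧ δ - γ < ‖z - w‖ := by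
  -- parameters
  set ε : ℝ := γ / 12 with hεdef
  have hεpos : 0 < ε := by positivity
  obtain ⟨y₀, η, hy₀, hη, hη1, hsm⟩ := smooth_point hY hεpos
  have hy₀ne : y₀ ≠ 0 := by
    intro h; rw [h, norm_zero] at hy₀; norm_num at hy₀
  obtain ⟨g₀, hg₀, hg₀y₀0⟩ := exists_dual_vector ℝ y₀ (norm_ne_zero_iff.mpr hy₀ne)
  rw [hy₀] at hg₀y₀0
  have hg₀y₀ : g₀ y₀ = 1 := by exact_mod_cast hg₀y₀0
  set θ : ℝ := ε * η / 8 with hθdef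
  have hθpos : 0 < θ := by positivity
  obtain ⟨ζ, e, hζ, he, hζe, hζf⟩ := hex θ hθpos
  -- rank one operators are in H
  have hmem : ∀ f' : X →L[ℝ] ℝ, ∀ y : Y, f'.smulRight y ∈ H := by
    intro f' y
    apply hHfin
    have hle : LinearMap.range ((f'.smulRight y : X →L[ℝ] Y) : X →ₗ[ℝ] Y) ≤ ℝ ∙ y := by
      rintro z ⟨x, rfl⟩
      simp only [ContinuousLinearMap.coe_coe, ContinuousLinearMap.smulRight_apply]
      exact Submodule.smul_mem _ _ (Submodule.mem_span_singleton_self y)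
    exact Submodule.finiteDimensional_of_le hle
  -- the map J : X* → H
  let Jlin : (X →L[ℝ] ℝ) →ₗ[ℝ] H :=
    { toFun := fun f' => ⟨f'.smulRight y₀, hmem f' y₀⟩
      map_add' := by
        intro a b
        apply Subtype.ext
        ext x
        simp [add_smul]
      map_smul' := by
        intro a b
        apply Subtype.ext
        ext x
        simp [smul_smul] }
  have hJb : ∀ f' : X →L[ℝ] ℝ, ‖Jlin f'‖ ≤ 1 * ‖f'‖ := by
    intro f'
    rw [one_mul]
    show ‖f'.smulRight y₀‖ ≤ ‖f'‖
    rw [ContinuousLinearMap.norm_smulRight_apply, hy₀, mul_one]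
  let J : (X →L[ℝ] ℝ) →L[ℝ] H := Jlin.mkContinuous 1 hJb
  have hJnorm : ‖J‖ ≤ 1 := Jlin.mkContinuous_norm_le zero_le_one hJb
  have hJapp : ∀ f' : X →L[ℝ] ℝ, ((J f' : H) : X →L[ℝ] Y) = f'.smulRight y₀ := fun _ => rfl
  -- the weak-star open set
  let A : H := J e
  let V_H : Set (WeakDual ℝ H) :=
    {ψ | 1 - θ < ψ A} ∩ ⋂ i, {ψ | |ψ (J (f i)) - vals i| < β}
  have hVopen : IsOpen V_H := by
    apply IsOpen.inter
    · have : {ψ : WeakDual ℝ H | 1 - θ < ψ A} = (fun ψ : WeakDual ℝ H => ψ A) ⁻¹' (Set.Ioi (1 - θ)) := rfl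
      rw [this]
      exact isOpen_Ioi.preimage (WeakDual.eval_continuous A)
    · apply isOpen_iInter_of_finite
      intro i
      have : {ψ : WeakDual ℝ H | |ψ (J (f i)) - vals i| < β}
          = (fun ψ : WeakDual ℝ H => ψ (J (f i))) ⁻¹' (Metric.ball (vals i) β) := by
        ext ψ
        simp [Metric.mem_ball, Real.dist_eq]
      rw [this]
      exact Metric.isOpen_ball.preimage (WeakDual.eval_continuous _)
  -- the functional F₀
  let Φlin : H →ₗ[ℝ] ℝ :=
    { toFun := fun SH => ζ (g₀.comp (SH : X →L[ℝ] Y))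
      map_add' := by
        intro a b
        simp [ContinuousLinearMap.comp_add]
      map_smul' := by
        intro a b
        simp [ContinuousLinearMap.comp_smul] }
  have hΦb : ∀ SH : H, ‖Φlin SH‖ ≤ 1 * ‖SH‖ := by
    intro SH
    rw [one_mul]
    calc ‖Φlin SH‖ = ‖ζ (g₀.comp (SH : X →L[ℝ] Y))‖ := rfl
    _ ≤ ‖ζ‖ * ‖g₀.comp (SH : X →L[ℝ] Y)‖ := ζ.le_opNorm _
    _ ≤ 1 * (‖g₀‖ * ‖(SH : X →L[ℝ] Y)‖) := by
        apply mul_le_mul hζ (ContinuousLinearMap.opNorm_comp_le _ _) (norm_nonneg _) zero_le_one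
    _ = ‖SH‖ := by rw [hg₀, one_mul, one_mul]; rfl
  let F₀ : StrongDual ℝ H := Φlin.mkContinuous 1 hΦb
  have hF₀norm : ‖F₀‖ ≤ 1 := Φlin.mkContinuous_norm_le zero_le_one hΦb
  have hcompJ : ∀ f' : X →L[ℝ] ℝ, g₀.comp ((J f' : H) : X →L[ℝ] Y) = f' := by
    intro f'
    rw [hJapp]
    ext x
    simp [hg₀y₀]
  have hF₀app : ∀ f' : X →L[ℝ] ℝ, F₀ (J f') = ζ f' := by
    intro f'
    show ζ (g₀.comp ((J f' : H) : X →L[ℝ] Y)) = ζ f'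
    rw [hcompJ]
  -- apply hH
  let U_H : Set (StrongDual ℝ H) :=
    {F : StrongDual ℝ H | ‖F‖ ≤ 1} ∩ {F : StrongDual ℝ H | StrongDual.toWeakDual F ∈ V_H}
  have hF₀mem : F₀ ∈ U_H := by
    refine ⟨hF₀norm, ?_, ?_⟩
    · show 1 - θ < F₀ A
      rw [show F₀ A = ζ e from hF₀app e]
      exact hζe
    · apply Set.mem_iInter.mpr
      intro i
      show |F₀ (J (f i)) - vals i| < β
      rw [hF₀app, hζf]
      simpa using hβ
  have hdiam : δ ≤ Metric.diam U_H := hH V_H hVopen U_H rfl ⟨F₀, hF₀mem⟩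
  -- extract a pair
  set c : ℝ := max (δ - γ / 2) 0 with hcdef
  have hcδ : c < δ := max_lt (by linarith) hδ
  have hpair : ∃ F G : StrongDual ℝ H, F ∈ U_H ∧ G ∈ U_H ∧ c < dist F G := by
    by_contra hcon
    push_neg at hcon
    have : Metric.diam U_H ≤ c := by
      apply Metric.diam_le_of_forall_dist_le (le_max_right _ _)
      intro F hF G hG
      exact hcon F G hF hG
    linarith
  obtain ⟨F, G, hF, hG, hFG⟩ := hpair
  -- the points downstairs
  refine ⟨F.comp J, G.comp J, ?_, ?_, ?_, ?_, ?_⟩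
  · calc ‖F.comp J‖ ≤ ‖F‖ * ‖J‖ := ContinuousLinearMap.opNorm_comp_le _ _
    _ ≤ 1 * 1 := mul_le_mul hF.1 hJnorm (norm_nonneg J) zero_le_one
    _ = 1 := one_mul _
  · calc ‖G.comp J‖ ≤ ‖G‖ * ‖J‖ := ContinuousLinearMap.opNorm_comp_le _ _
    _ ≤ 1 * 1 := mul_le_mul hG.1 hJnorm (norm_nonneg J) zero_le_one
    _ = 1 := one_mul _
  · intro i
    exact Set.mem_iInter.mp hF.2.2 i
  · intro i
    exact Set.mem_iInter.mp hG.2.2 i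
  · -- the norm estimate
    have htilde : ∀ F' : StrongDual ℝ H, ‖F'‖ ≤ 1 → 1 - θ < F' A →
        ∀ SHt : H, (∀ x, g₀ ((SHt : X →L[ℝ] Y) x) = 0) →
        |F' SHt| ≤ (5 / 4 * ε) * ‖SHt‖ := by
      intro F' hF'n hF'A SHt h0
      rcases eq_or_ne SHt 0 with rfl | hne
      · simp
      have hpos : (0:ℝ) < ‖SHt‖ := norm_pos_iff.mpr hne
      set t : ℝ := η / (2 * ‖SHt‖) with htdef
      have ht0 : 0 ≤ t := by positivity
      have hpos' : ‖SHt‖ ≠ 0 := ne_of_gt hpos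
      have hpos'' : ‖(SHt : X →L[ℝ] Y)‖ ≠ 0 := hpos'
      have htprod : t * ‖SHt‖ = η / 2 := by
        rw [htdef]; field_simp
      have hcoen : ‖(SHt : X →L[ℝ] Y)‖ = ‖SHt‖ := rfl
      have hbound : ∀ s : ℝ, s = 1 ∨ s = -1 →
          ‖(A : X →L[ℝ] Y) + t • (s • (SHt : X →L[ℝ] Y))‖ ≤ 1 + ε * (η / 2) := by
        intro s hs
        have hSnorm : ‖s • (SHt : X →L[ℝ] Y)‖ = ‖(SHt : X →L[ℝ] Y)‖ := by
          rcases hs with rfl | rfl <;> simp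
        have h0' : ∀ x, g₀ ((s • (SHt : X →L[ℝ] Y)) x) = 0 := by
          intro x
          simp [h0 x]
        have := knb (X := X) hy₀ hg₀ hg₀y₀ hεpos hη hη1 hsm e he
          (s • (SHt : X →L[ℝ] Y)) h0' ht0 (by rw [hSnorm, hcoen, htprod])
        rw [hSnorm, hcoen, htprod] at this
        calc ‖(A : X →L[ℝ] Y) + t • (s • (SHt : X →L[ℝ] Y))‖
            = ‖e.smulRight y₀ + t • (s • (SHt : X →L[ℝ] Y))‖ := by rw [hJapp]
        _ ≤ 1 + ε * (η / 2) := this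
      have hkey : ∀ s : ℝ, s = 1 ∨ s = -1 → F' A + t * (s * F' SHt) ≤ 1 + ε * (η / 2) := by
        intro s hs
        have h1 : F' (A + t • (s • SHt)) = F' A + t * (s * F' SHt) := by
          rw [map_add, map_smul, map_smul]
          simp [smul_eq_mul]
        have h2 : ‖A + t • (s • SHt)‖ = ‖(A : X →L[ℝ] Y) + t • (s • (SHt : X →L[ℝ] Y))‖ := rfl
        have h3 : F' (A + t • (s • SHt)) ≤ ‖F'‖ * ‖A + t • (s • SHt)‖ := by
          calc F' (A + t • (s • SHt)) ≤ |F' (A + t • (s • SHt))| := le_abs_self _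
          _ = ‖F' (A + t • (s • SHt))‖ := rfl
          _ ≤ ‖F'‖ * ‖A + t • (s • SHt)‖ := F'.le_opNorm _
        have h4 := hbound s hs
        rw [← h2] at h4
        have h5 : ‖F'‖ * ‖A + t • (s • SHt)‖ ≤ 1 * (1 + ε * (η/2)) := by
          apply mul_le_mul hF'n h4 (norm_nonneg _) zero_le_one
        rw [one_mul] at h5
        linarith [h1 ▸ (le_trans h3 h5)]
      have hplus := hkey 1 (Or.inl rfl)
      have hminus := hkey (-1) (Or.inr rfl)
      rw [one_mul] at hplus
      have htpos : 0 < t := by positivity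
      have habs : |F' SHt| * t ≤ θ + ε * (η / 2) := by
        rcases abs_cases (F' SHt) with ⟨hab, _⟩ | ⟨hab, _⟩
        · rw [hab]
          nlinarith
        · rw [hab]
          nlinarith
      have hθt : (θ + ε * (η / 2)) / t = (5 / 4 * ε) * ‖SHt‖ := by
        rw [hθdef, htdef]
        field_simp
        ring
      have htne : t ≠ 0 := ne_of_gt htpos
      calc |F' SHt| = (|F' SHt| * t) / t := by field_simp
      _ ≤ (θ + ε * (η / 2)) / t := (div_le_div_iff_of_pos_right htpos).mpr habs
      _ = (5 / 4 * ε) * ‖SHt‖ := hθt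
    -- main estimate: ‖F - G‖ ≤ ‖z - w‖ + 5ε
    set z : StrongDual ℝ (StrongDual ℝ X) := F.comp J with hzdef
    set w : StrongDual ℝ (StrongDual ℝ X) := G.comp J with hwdef
    have hmain : ∀ SH : H, |(F - G) SH| ≤ (‖z - w‖ + 5 * ε) * ‖SH‖ := by
      intro SH
      set g : X →L[ℝ] ℝ := g₀.comp (SH : X →L[ℝ] Y) with hgdef
      have hgnorm : ‖g‖ ≤ ‖SH‖ := by
        calc ‖g‖ ≤ ‖g₀‖ * ‖(SH : X →L[ℝ] Y)‖ := ContinuousLinearMap.opNorm_comp_le _ _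
        _ = ‖SH‖ := by rw [hg₀, one_mul]; rfl
      set SHt : H := SH - J g with hSHtdef
      have hSHtcoe : ((SHt : H) : X →L[ℝ] Y) = (SH : X →L[ℝ] Y) - g.smulRight y₀ := by
        rw [hSHtdef]
        push_cast
        rw [hJapp]
      have h0 : ∀ x, g₀ ((SHt : X →L[ℝ] Y) x) = 0 := by
        intro x
        rw [hSHtcoe]
        simp only [ContinuousLinearMap.sub_apply, ContinuousLinearMap.smulRight_apply, map_sub,
          map_smul]
        simp [hg₀y₀, hgdef, smul_eq_mul]
      have hSHtnorm : ‖SHt‖ ≤ 2 * ‖SH‖ := by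
        calc ‖SHt‖ = ‖(SH : X →L[ℝ] Y) - g.smulRight y₀‖ := by rw [← hSHtcoe]; rfl
        _ ≤ ‖(SH : X →L[ℝ] Y)‖ + ‖g.smulRight y₀‖ := norm_sub_le _ _
        _ ≤ ‖SH‖ + ‖g‖ := by
            rw [ContinuousLinearMap.norm_smulRight_apply, hy₀, mul_one]
            rfl
        _ ≤ 2 * ‖SH‖ := by linarith
      have hdecomp : (F - G) SH = (z - w) g + (F - G) SHt := by
        have h6 : SH = J g + SHt := by rw [hSHtdef]; abel
        calc (F - G) SH = (F - G) (J g + SHt) := by rw [← h6]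
        _ = (F - G) (J g) + (F - G) SHt := map_add _ _ _
        _ = (z - w) g + (F - G) SHt := rfl
      have hb1 : |(z - w) g| ≤ ‖z - w‖ * ‖SH‖ := by
        calc |(z - w) g| = ‖(z - w) g‖ := rfl
        _ ≤ ‖z - w‖ * ‖g‖ := (z - w).le_opNorm _
        _ ≤ ‖z - w‖ * ‖SH‖ := mul_le_mul_of_nonneg_left hgnorm (norm_nonneg _)
      have hFtl := htilde F hF.1 hF.2.1 SHt h0
      have hGtl := htilde G hG.1 hG.2.1 SHt h0
      have hb2 : |(F - G) SHt| ≤ 2 * ((5 / 4 * ε) * ‖SHt‖) := by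
        rw [ContinuousLinearMap.sub_apply]
        calc |F SHt - G SHt| ≤ |F SHt| + |G SHt| := abs_sub _ _
        _ ≤ 2 * ((5 / 4 * ε) * ‖SHt‖) := by linarith
      calc |(F - G) SH| ≤ |(z - w) g| + |(F - G) SHt| := by
            rw [hdecomp]; exact abs_add_le _ _
      _ ≤ ‖z - w‖ * ‖SH‖ + 2 * ((5 / 4 * ε) * ‖SHt‖) := by linarith
      _ ≤ ‖z - w‖ * ‖SH‖ + 2 * ((5 / 4 * ε) * (2 * ‖SH‖)) := by
            have : (0:ℝ) ≤ 5 / 4 * ε := by positivity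
            nlinarith
      _ = (‖z - w‖ + 5 * ε) * ‖SH‖ := by ring
    have hFGnorm : ‖F - G‖ ≤ ‖z - w‖ + 5 * ε := by
      apply ContinuousLinearMap.opNorm_le_bound
      · have : (0:ℝ) ≤ ‖z - w‖ := norm_nonneg _
        linarith [hεpos.le]
      intro SH
      exact hmain SH
    have hdistFG : c < ‖F - G‖ := by rwa [dist_eq_norm] at hFG
    have hc1 : δ - γ / 2 ≤ c := le_max_left _ _
    rw [hεdef] at hFGnorm
    linarith

lemma norming {E : Type*} [NormedAddCommGroup E] [NormedSpace ℝ E]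
    (ζ : E →L[ℝ] ℝ) {θ : ℝ} (h : 1 - θ < ‖ζ‖) : ∃ e : E, ‖e‖ ≤ 1 ∧ 1 - θ < ζ e := by
  rcases lt_or_ge (1 - θ) 0 with hneg | h0
  · exact ⟨0, by simp, by simpa using hneg⟩
  · have h1 : ¬ ‖ζ‖ ≤ 1 - θ := not_le.mpr h
    rw [ContinuousLinearMap.opNorm_le_iff h0] at h1
    push_neg at h1
    obtain ⟨u, hu⟩ := h1
    have hune : u ≠ 0 := by
      intro h2
      rw [h2] at hu
      simp at hu
    have hupos : (0:ℝ) < ‖u‖ := norm_pos_iff.mpr hune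
    refine ⟨‖u‖⁻¹ • (if ζ u < 0 then -u else u), ?_, ?_⟩
    · rw [norm_smul]
      have : ‖if ζ u < 0 then -u else u‖ = ‖u‖ := by
        split <;> simp
      rw [this]
      simp [hupos.ne']
    · have habs : (1 - θ) * ‖u‖ < |ζ u| := hu
      have : ζ (‖u‖⁻¹ • (if ζ u < 0 then -u else u)) = ‖u‖⁻¹ * |ζ u| := by
        rw [map_smul]
        rcases lt_or_ge (ζ u) 0 with hlt | hge
        · rw [if_pos hlt, map_neg, abs_of_neg hlt]
          simp [smul_eq_mul]
        · rw [if_neg (not_lt.mpr hge), abs_of_nonneg hge]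
          simp [smul_eq_mul]
      rw [this]
      calc 1 - θ = ((1 - θ) * ‖u‖) * ‖u‖⁻¹ := by field_simp
      _ < |ζ u| * ‖u‖⁻¹ := by
          apply mul_lt_mul_of_pos_right habs (by positivity)
      _ = ‖u‖⁻¹ * |ζ u| := mul_comm _ _


end Auxiliary

theorem stmt18
    (X Y : Type*) [NormedAddCommGroup X] [NormedSpace ℝ X] [CompleteSpace X] [Nontrivial X]
    [NormedAddCommGroup Y] [NormedSpace ℝ Y] [CompleteSpace Y] [Nontrivial Y]
    (H : Submodule ℝ (X →L[ℝ] Y)) (hHclosed : IsClosed (H : Set (X →L[ℝ] Y)))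
    (hHfin : ∀ T : X →L[ℝ] Y, FiniteDimensional ℝ (LinearMap.range (T : X →ₗ[ℝ] Y)) → T ∈ H)
    (δ : ℝ) (hδ : 0 < δ)
    (hH : WeaklyAverageRough H δ) (hY : NonRough Y) :
    WeaklyAverageRough (StrongDual ℝ X) δ := by
  intro V' hV' U' hU'eq hU'ne
  obtain ⟨z₀, hz₀⟩ := hU'ne
  rw [hU'eq] at hz₀
  obtain ⟨hz₀n, hz₀V⟩ := hz₀
  obtain ⟨n, v, α, hα, hbasic⟩ := weakdual_basic hV' hz₀V
  have hUsub : ∀ z : StrongDual ℝ (StrongDual ℝ X), ‖z‖ ≤ 1 → (∀ i, |z (v i) - z₀ (v i)| < α) → z ∈ U' := by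
    intro z hzn hzv
    rw [hU'eq]
    refine ⟨hzn, hbasic ?_⟩
    intro i
    exact hzv i
  have hbdd : Bornology.IsBounded U' := by
    apply Bornology.IsBounded.subset (Metric.isBounded_closedBall (x := (0 : StrongDual ℝ (StrongDual ℝ X))) (r := 1))
    intro x hx
    rw [hU'eq] at hx
    rw [Metric.mem_closedBall, dist_zero_right]
    exact hx.1
  by_cases hw : ∃ wd : StrongDual ℝ (StrongDual ℝ X), wd ≠ 0 ∧ ∀ i, wd (v i) = 0
  · -- infinite-dimensional-like case
    obtain ⟨wd, hwdne, hwd0⟩ := hw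
    have hwdpos : (0:ℝ) < ‖wd‖ :=
      lt_of_le_of_ne (norm_nonneg wd) (fun hc => hwdne ((ContinuousLinearMap.opNorm_zero_iff wd).mp hc.symm))
    set wdu : StrongDual ℝ (StrongDual ℝ X) := ‖wd‖⁻¹ • wd with hwdudef
    have hwdu : ‖wdu‖ = 1 := by
      rw [hwdudef, norm_smul]
      simp [hwdpos.ne']
    have hwdu0 : ∀ i, wdu (v i) = 0 := by
      intro i
      rw [hwdudef]
      simp [hwd0 i]
    have hex : ∀ θ : ℝ, 0 < θ → ∃ (ζ : StrongDual ℝ (StrongDual ℝ X)) (e : X →L[ℝ] ℝ),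
        ‖ζ‖ ≤ 1 ∧ ‖e‖ ≤ 1 ∧ 1 - θ < ζ e ∧ ∀ i, ζ (v i) = z₀ (v i) := by
      intro θ hθ
      rcases le_or_gt (1 - θ/2) ‖z₀‖ with hcase | hcase
      · have h1 : 1 - θ < ‖z₀‖ := by linarith
        obtain ⟨e, he1, he2⟩ := norming z₀ h1
        exact ⟨z₀, e, hz₀n, he1, he2, fun i => rfl⟩
      · have hcont : ContinuousOn (fun t : ℝ => ‖z₀ + t • wdu‖) (Set.Icc 0 2) := by
          apply Continuous.continuousOn
          continuity
        have hival : (1 - θ/2) ∈ Set.Icc ((fun t : ℝ => ‖z₀ + t • wdu‖) 0) ((fun t : ℝ => ‖z₀ + t • wdu‖) 2) := by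
          constructor
          · simp only [zero_smul, add_zero]
            exact hcase.le
          · simp only
            have h2 : ‖(2:ℝ) • wdu‖ - ‖z₀‖ ≤ ‖z₀ + (2:ℝ) • wdu‖ := by
              have := norm_sub_norm_le ((2:ℝ) • wdu) (-z₀)
              calc ‖(2:ℝ) • wdu‖ - ‖z₀‖ = ‖(2:ℝ) • wdu‖ - ‖-z₀‖ := by rw [norm_neg]
              _ ≤ ‖(2:ℝ) • wdu - -z₀‖ := norm_sub_norm_le _ _
              _ = ‖z₀ + (2:ℝ) • wdu‖ := by rw [sub_neg_eq_add, add_comm]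
            have h3 : ‖(2:ℝ) • wdu‖ = 2 := by
              rw [norm_smul, hwdu]
              norm_num
            have h4 : ‖z₀‖ ≤ 1 := hz₀n
            linarith
        obtain ⟨t', ht'mem, ht'⟩ := intermediate_value_Icc (by norm_num : (0:ℝ) ≤ 2) hcont hival
        set ζ : StrongDual ℝ (StrongDual ℝ X) := z₀ + t' • wdu with hζdef
        have hζnorm : ‖ζ‖ = 1 - θ/2 := ht'
        have h1 : 1 - θ < ‖ζ‖ := by rw [hζnorm]; linarith
        obtain ⟨e, he1, he2⟩ := norming ζ h1
        refine ⟨ζ, e, by rw [hζnorm]; linarith, he1, he2, ?_⟩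
        intro i
        rw [hζdef]
        simp [hwdu0 i]
    apply le_of_forall_sub_le
    intro γ hγ
    obtain ⟨z, w, hzn, hwn, hzv, hwv, hzw⟩ :=
      core H hHfin hδ hH hY v (fun i => z₀ (v i)) hex hα hγ
    have hzU : z ∈ U' := hUsub z hzn hzv
    have hwU : w ∈ U' := hUsub w hwn hwv
    calc δ - γ ≤ ‖z - w‖ := hzw.le
    _ = dist z w := (dist_eq_norm _ _).symm
    _ ≤ Metric.diam U' := Metric.dist_le_diam_of_mem hbdd hzU hwU
  · -- finite-dimensional case : derive a contradiction
    exfalso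
    push_neg at hw
    -- the evaluation map is injective
    let Θ : StrongDual ℝ (StrongDual ℝ X) →ₗ[ℝ] (Fin n → ℝ) :=
      { toFun := fun wd => fun i => wd (v i)
        map_add' := by intro a b; ext i; simp
        map_smul' := by intro a b; ext i; simp }
    have hΘinj : Function.Injective Θ := by
      intro a b hab
      by_contra hne
      have h1 : a - b ≠ 0 := sub_ne_zero.mpr hne
      obtain ⟨i, hi⟩ := hw (a - b) h1
      apply hi
      have : (Θ a) i = (Θ b) i := by rw [hab]
      simpa [Θ, ContinuousLinearMap.sub_apply] using sub_eq_zero.mpr this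
    haveI : FiniteDimensional ℝ (StrongDual ℝ (StrongDual ℝ X)) := FiniteDimensional.of_injective Θ hΘinj
    obtain ⟨L, hL⟩ := Θ.exists_leftInverse_of_injective (LinearMap.ker_eq_bot.mpr hΘinj)
    let L' : (Fin n → ℝ) →L[ℝ] StrongDual ℝ (StrongDual ℝ X) := LinearMap.toContinuousLinearMap L
    set C : ℝ := ‖L'‖ + 1 with hCdef
    have hCpos : 0 < C := by positivity
    have hCbound : ∀ zz : StrongDual ℝ (StrongDual ℝ X), ‖zz‖ ≤ C * ‖Θ zz‖ := by
      intro zz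
      have h1 : L (Θ zz) = zz := by
        have := congrArg (fun φ => φ zz) hL
        simpa using this
      calc ‖zz‖ = ‖L' (Θ zz)‖ := by rw [show L' (Θ zz) = L (Θ zz) from rfl, h1]
      _ ≤ ‖L'‖ * ‖Θ zz‖ := L'.le_opNorm _
      _ ≤ C * ‖Θ zz‖ := by
          apply mul_le_mul_of_nonneg_right (by rw [hCdef]; linarith) (norm_nonneg _)
    -- a norm-one element of the double dual
    obtain ⟨x, hx⟩ := exists_ne (0 : X)
    have hxpos : (0:ℝ) < ‖x‖ := norm_pos_iff.mpr hx
    set ζ : StrongDual ℝ (StrongDual ℝ X) := ‖x‖⁻¹ • (NormedSpace.inclusionInDoubleDualLi ℝ x) with hζdef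
    have hζnorm : ‖ζ‖ = 1 := by
      rw [hζdef, norm_smul, (NormedSpace.inclusionInDoubleDualLi ℝ).norm_map]
      simp [hxpos.ne']
    have hex : ∀ θ : ℝ, 0 < θ → ∃ (ζ' : StrongDual ℝ (StrongDual ℝ X)) (e : X →L[ℝ] ℝ),
        ‖ζ'‖ ≤ 1 ∧ ‖e‖ ≤ 1 ∧ 1 - θ < ζ' e ∧ ∀ i, ζ' (v i) = ζ (v i) := by
      intro θ hθ
      have h1 : 1 - θ < ‖ζ‖ := by rw [hζnorm]; linarith
      obtain ⟨e, he1, he2⟩ := norming ζ h1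
      exact ⟨ζ, e, hζnorm.le, he1, he2, fun i => rfl⟩
    set β : ℝ := δ / (8 * C) with hβdef
    have hβpos : 0 < β := by positivity
    obtain ⟨z, w, hzn, hwn, hzv, hwv, hzw⟩ :=
      core H hHfin hδ hH hY v (fun i => ζ (v i)) hex hβpos (half_pos hδ)
    -- z - w is small
    have hsmall : ‖z - w‖ ≤ C * (2 * β) := by
      have h1 : ‖Θ (z - w)‖ ≤ 2 * β := by
        apply (pi_norm_le_iff_of_nonneg (by positivity)).mpr
        intro i
        have h2 : (Θ (z - w)) i = (z (v i) - ζ (v i)) - (w (v i) - ζ (v i)) := by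
          simp [Θ, ContinuousLinearMap.sub_apply]
        rw [h2]
        have h3 := hzv i
        have h4 := hwv i
        rw [Real.norm_eq_abs]
        calc |(z (v i) - ζ (v i)) - (w (v i) - ζ (v i))|
            ≤ |z (v i) - ζ (v i)| + |w (v i) - ζ (v i)| := abs_sub _ _
        _ ≤ 2 * β := by linarith
      calc ‖z - w‖ ≤ C * ‖Θ (z - w)‖ := hCbound _
      _ ≤ C * (2 * β) := mul_le_mul_of_nonneg_left h1 hCpos.le
    have : δ - δ/2 < C * (2 * β) := lt_of_lt_of_le hzw hsmall
    rw [hβdef] at this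
    have h5 : C * (2 * (δ / (8 * C))) = δ / 4 := by field_simp; ring
    rw [h5] at this
    linarith
end
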